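/- arXiv:1803.08755 — 6 statements merged into one kernel-verified Lean document; each statement's English description precedes it below -/
import Mathlib

section
/- There exist constants c₁, c₂ > 0 such that for all integers H ≥ 2, c₁·H²·log H ≤ D_4(2,2;H) ≤ c₂·H²·log H, where log denotes the natural logarithm. -/
/-!
A monic composite `g ∘ h` of two quadratics can always be rewritten as
`(X ^ 2 + v X + w) ∘ (X ^ 2 + p X)`: the leading coefficient of `h` is a unit `u`, so
`h = (u X + h(0)) ∘ (X ^ 2 + p X)` with `p = u⁻¹ h₁`, and `g ∘ (u X + h(0))` is again a monic
quadratic. The coefficients of this quartic are `1, 2p, p² + v, pv, w`, so they determine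
`(p, v, w)`, and the count is `2H + 1` (choices of `w`) times the number of pairs `(p, v)` with
`|2p|, |p² + v|, |pv| ≤ H`. These pairs lie under the hyperbola `|pv| ≤ H`, which carries
`O(H log H)` lattice points in the box `[-H, H]²`; conversely they include all pairs with
`0 ≤ p ≤ √(H/2)` and `|2pv| ≤ H`, and the harmonic sum over `p` shows there are `≫ H log H` of
those.
-/
open Polynomial

/-- The height of an integer polynomial is at most `H`. -/
def HeightLe (f : ℤ[X]) (H : ℕ) : Prop := ∀ i, |f.coeff i| ≤ (H : ℤ)

/-- `DMonic d m n H` is the number of monic integer polynomials of degree `d` and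
height at most `H` that are a composition `g ∘ h` with `deg g = m`, `deg h = n`. -/
noncomputable def DMonic (d m n : ℕ) (H : ℕ) : ℕ :=
  Nat.card {f : ℤ[X] // f.Monic ∧ f.natDegree = d ∧ HeightLe f H ∧
    ∃ g h : ℤ[X], g.natDegree = m ∧ h.natDegree = n ∧ f = g.comp h}

open Finset

section Quartic

variable {R : Type*} [CommRing R]

noncomputable def quartic (p v w : R) : R[X] := (X ^ 2 + C v * X + C w).comp (X ^ 2 + C p * X)

lemma quartic_eq (p v w : R) :
    quartic p v w = X ^ 4 + C (2 * p) * X ^ 3 + C (p ^ 2 + v) * X ^ 2 + C (p * v) * X + C w := by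
  simp only [quartic, add_comp, mul_comp, pow_comp, C_comp, X_comp, C_add, C_mul, C_pow, C_ofNat]
  ring

lemma natDegree_quartic [Nontrivial R] (p v w : R) : (quartic p v w).natDegree = 4 := by
  rw [quartic_eq]
  compute_degree!

lemma monic_quartic (p v w : R) : (quartic p v w).Monic := by
  rw [quartic_eq]
  monicity!

section Coefficients

variable (p v w : R)

lemma coeff_quartic_zero : (quartic p v w).coeff 0 = w := by
  simp only [quartic_eq, coeff_add, coeff_C_mul, coeff_X_pow, coeff_X, coeff_C]
  norm_num

lemma coeff_quartic_one : (quartic p v w).coeff 1 = p * v := by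
  simp only [quartic_eq, coeff_add, coeff_C_mul, coeff_X_pow, coeff_X, coeff_C]
  norm_num

lemma coeff_quartic_two : (quartic p v w).coeff 2 = p ^ 2 + v := by
  simp only [quartic_eq, coeff_add, coeff_C_mul, coeff_X_pow, coeff_X, coeff_C]
  norm_num

lemma coeff_quartic_three : (quartic p v w).coeff 3 = 2 * p := by
  simp only [quartic_eq, coeff_add, coeff_C_mul, coeff_X_pow, coeff_X, coeff_C]
  norm_num

end Coefficients

lemma eq_quadratic_of_natDegree_eq_two {q : R[X]} (hq : q.natDegree = 2) :
    q = C q.leadingCoeff * X ^ 2 + C (q.coeff 1) * X + C (q.coeff 0) := by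
  conv_lhs => rw [as_sum_range_C_mul_X_pow q, hq]
  simp [sum_range_succ, leadingCoeff, hq]
  ring

lemma exists_eq_quartic_of_comp [NoZeroDivisors R] {g h : R[X]} (hg : g.natDegree = 2)
    (hh : h.natDegree = 2) (hm : (g.comp h).Monic) : ∃ p v w : R, g.comp h = quartic p v w := by
  nontriviality R
  have hlc : g.leadingCoeff * h.leadingCoeff ^ 2 = 1 := by
    rw [← hg, ← leadingCoeff_comp (by omega)]
    exact hm
  obtain ⟨u, hu⟩ : IsUnit h.leadingCoeff :=
    .of_mul_eq_one (g.leadingCoeff * h.leadingCoeff) (by linear_combination hlc)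
  set a := h.coeff 1
  set b := h.coeff 0
  have hh' : h = (C (u : R) * X + C b).comp (X ^ 2 + C ((u⁻¹ : Rˣ) * a) * X) := by
    conv_lhs => rw [eq_quadratic_of_natDegree_eq_two hh, ← hu]
    simp only [add_comp, mul_comp, C_comp, X_comp, C_mul]
    rw [mul_add, ← mul_assoc, ← mul_assoc, ← C_mul, Units.mul_inv, C_1, one_mul]
  set g' := g.comp (C (u : R) * X + C b)
  have hlin : (C (u : R) * X + C b).natDegree = 1 := natDegree_linear u.ne_zero
  have hg'deg : g'.natDegree = 2 := by rw [natDegree_comp, hg, hlin]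
  have hg' : g'.Monic := by
    rw [Monic, leadingCoeff_comp (by omega), hg, leadingCoeff_linear u.ne_zero, hu, hlc]
  refine ⟨(u⁻¹ : Rˣ) * a, g'.coeff 1, g'.coeff 0, ?_⟩
  rw [hh', ← comp_assoc, quartic]
  congr 1
  simpa [hg'.leadingCoeff] using eq_quadratic_of_natDegree_eq_two hg'deg

end Quartic

lemma quartic_injective :
    Function.Injective fun x : (ℤ × ℤ) × ℤ ↦ quartic x.1.1 x.1.2 x.2 := by
  rintro ⟨⟨p, v⟩, w⟩ ⟨⟨p', v'⟩, w'⟩ heq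
  have h₃ := congrArg (coeff · 3) heq
  have h₂ := congrArg (coeff · 2) heq
  have h₀ := congrArg (coeff · 0) heq
  simp only [coeff_quartic_three, coeff_quartic_two, coeff_quartic_zero] at h₃ h₂ h₀
  obtain rfl : p = p' := by omega
  simp_all

lemma heightLe_quartic_iff {H : ℕ} (hH : 1 ≤ H) {p v w : ℤ} :
    HeightLe (quartic p v w) H ↔
      |2 * p| ≤ H ∧ |p ^ 2 + v| ≤ H ∧ |p * v| ≤ H ∧ |w| ≤ H := by
  refine ⟨fun h ↦ ?_, fun ⟨h₃, h₂, h₁, h₀⟩ i ↦ ?_⟩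
  · exact ⟨coeff_quartic_three p v w ▸ h 3, coeff_quartic_two p v w ▸ h 2,
      coeff_quartic_one p v w ▸ h 1, coeff_quartic_zero p v w ▸ h 0⟩
  rcases i with _ | _ | _ | _ | _ | i
  · rwa [coeff_quartic_zero]
  · rwa [coeff_quartic_one]
  · rwa [coeff_quartic_two]
  · rwa [coeff_quartic_three]
  · have := (monic_quartic p v w).coeff_natDegree
    rw [natDegree_quartic] at this
    simp [this, hH]
  · rw [coeff_eq_zero_of_natDegree_lt (by rw [natDegree_quartic]; omega)]
    simp

noncomputable def quarticPairs (H : ℕ) : Finset (ℤ × ℤ) :=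
  {x ∈ Icc (-H : ℤ) H ×ˢ Icc (-H : ℤ) H |
    |2 * x.1| ≤ H ∧ |x.1 ^ 2 + x.2| ≤ H ∧ |x.1 * x.2| ≤ H}

lemma mem_quarticPairs {H : ℕ} {p v : ℤ} :
    (p, v) ∈ quarticPairs H ↔ |2 * p| ≤ H ∧ |p ^ 2 + v| ≤ H ∧ |p * v| ≤ H := by
  simp only [quarticPairs, mem_filter, mem_product, mem_Icc, and_iff_right_iff_imp]
  rintro ⟨h₃, h₂, h₁⟩
  have hp : |p| ≤ H := by rw [abs_mul] at h₃; norm_num at h₃; omega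
  have hv : |v| ≤ H := by
    rcases eq_or_ne p 0 with rfl | hp0
    · simpa using h₂
    · rw [abs_mul] at h₁
      nlinarith [Int.one_le_abs hp0, abs_nonneg v]
  exact ⟨abs_le.mp hp, abs_le.mp hv⟩

lemma DMonic_four_two_two_eq {H : ℕ} (hH : 1 ≤ H) :
    DMonic 4 2 2 H = #(quarticPairs H) * (2 * H + 1) := by
  have hset : {f : ℤ[X] | f.Monic ∧ f.natDegree = 4 ∧ HeightLe f H ∧
      ∃ g h : ℤ[X], g.natDegree = 2 ∧ h.natDegree = 2 ∧ f = g.comp h} =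
      (fun x : (ℤ × ℤ) × ℤ ↦ quartic x.1.1 x.1.2 x.2) ''
        ↑(quarticPairs H ×ˢ Icc (-H : ℤ) H) := by
    ext f
    constructor
    · rintro ⟨hm, -, hht, g, h, hg, hh, rfl⟩
      obtain ⟨p, v, w, hf⟩ := exists_eq_quartic_of_comp hg hh hm
      rw [hf, heightLe_quartic_iff hH] at hht
      refine ⟨((p, v), w), ?_, hf.symm⟩
      simp only [coe_product, Set.mem_prod, mem_coe, mem_quarticPairs, mem_Icc]
      exact ⟨⟨hht.1, hht.2.1, hht.2.2.1⟩, abs_le.mp hht.2.2.2⟩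
    · rintro ⟨⟨⟨p, v⟩, w⟩, hx, rfl⟩
      simp only [coe_product, Set.mem_prod, mem_coe, mem_quarticPairs, mem_Icc] at hx
      refine ⟨monic_quartic p v w, natDegree_quartic p v w,
        (heightLe_quartic_iff hH).2 ⟨hx.1.1, hx.1.2.1, hx.1.2.2, abs_le.mpr hx.2⟩,
        _, _, ?_, ?_, rfl⟩ <;> compute_degree!
  change Nat.card ↥{f : ℤ[X] | _} = _
  rw [Nat.card_coe_set_eq, hset, Set.ncard_image_of_injective _ quartic_injective,
    Set.ncard_coe_finset, card_product, Int.card_Icc]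
  congr 1
  omega

lemma card_filter_product_eq_sum {α β : Type*} (s : Finset α) (t : Finset β)
    (P : α → β → Prop) [∀ a, DecidablePred (P a)] :
    #{x ∈ s ×ˢ t | P x.1 x.2} = ∑ a ∈ s, #{b ∈ t | P a b} := by
  simp only [card_filter, sum_product]

-- `max 1` makes the formula also right for `a = 0`, where `N / 0 = 0`.
lemma card_filter_abs_mul_le (N : ℕ) (a : ℤ) :
    #{v ∈ Icc (-N : ℤ) N | |a * v| ≤ N} = 2 * (N / max 1 a.natAbs) + 1 := by
  have key : ∀ n : ℕ, a.natAbs * n ≤ N ∧ n ≤ N ↔ n ≤ N / max 1 a.natAbs := by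
    intro n
    rcases Nat.eq_zero_or_pos a.natAbs with ha | ha
    · simp [ha]
    · rw [max_eq_right ha, Nat.le_div_iff_mul_le ha, mul_comm]
      exact ⟨And.left, fun h ↦ ⟨h, le_trans (Nat.le_mul_of_pos_right n ha) h⟩⟩
  have hset : {v ∈ Icc (-N : ℤ) N | |a * v| ≤ N} =
      Icc (-(N / max 1 a.natAbs : ℕ) : ℤ) (N / max 1 a.natAbs : ℕ) := by
    ext v
    have := key v.natAbs
    simp only [mem_filter, mem_Icc, ← abs_le, abs_mul, Int.abs_eq_natAbs] at this ⊢
    omega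
  rw [hset, Int.card_Icc]
  omega

lemma abs_card_filter_abs_mul_le_sub_le (N : ℕ) (a : ℤ) :
    |(#{v ∈ Icc (-N : ℤ) N | |a * v| ≤ N} : ℝ) - 2 * N / (max 1 a.natAbs : ℕ)| ≤ 1 := by
  rw [card_filter_abs_mul_le, ← Nat.floor_div_eq_div (K := ℝ), mul_div_assoc]
  set x := (N : ℝ) / (max 1 a.natAbs : ℕ)
  have h₁ := Nat.floor_le (by positivity : 0 ≤ x)
  have h₂ := Nat.sub_one_lt_floor x
  push_cast
  rw [abs_le]
  constructor <;> linarith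

lemma sum_range_succ_inv_max_one (n : ℕ) :
    ∑ k ∈ range (n + 1), ((max 1 k : ℕ) : ℝ)⁻¹ = 1 + harmonic n := by
  rw [sum_range_succ', harmonic]
  push_cast
  simp [add_comm]

lemma card_hyperbola_le {N : ℕ} (hN : 1 ≤ N) :
    (#{x ∈ Icc (-N : ℤ) N ×ˢ Icc (-N : ℤ) N | |x.1 * x.2| ≤ (N : ℤ)} : ℝ) ≤
      4 * N * (Real.log N + 3) := by
  set c : ℤ → ℝ := fun a ↦ #{v ∈ Icc (-N : ℤ) N | |a * v| ≤ N}
  have hc_even : c.Even := fun a ↦ by simp only [c, card_filter_abs_mul_le, Int.natAbs_neg]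
  have hc_le (k : ℕ) : c k ≤ 2 * N * ((max 1 k : ℕ) : ℝ)⁻¹ + 1 := by
    have := (abs_le.mp (abs_card_filter_abs_mul_le_sub_le N k)).2
    rw [Int.natAbs_natCast] at this
    rw [← div_eq_mul_inv]
    linarith
  have hc_sum : ∑ k ∈ range (N + 1), c k ≤ 2 * N * (1 + harmonic N) + (N + 1) := by
    calc ∑ k ∈ range (N + 1), c k
        ≤ ∑ k ∈ range (N + 1), (2 * N * ((max 1 k : ℕ) : ℝ)⁻¹ + 1) :=
          sum_le_sum fun k _ ↦ hc_le k
      _ = 2 * N * (1 + harmonic N) + (N + 1) := by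
        rw [sum_add_distrib, ← mul_sum, sum_range_succ_inv_max_one]
        simp
  have hc_zero : 0 ≤ c 0 := by positivity
  have hN' : (1 : ℝ) ≤ N := by exact_mod_cast hN
  have hharm := harmonic_le_one_add_log N
  calc (#{x ∈ Icc (-N : ℤ) N ×ˢ Icc (-N : ℤ) N | |x.1 * x.2| ≤ (N : ℤ)} : ℝ)
      = ∑ a ∈ Icc (-N : ℤ) N, c a := by
        simp only [c]
        exact_mod_cast card_filter_product_eq_sum _ _ fun a v ↦ |a * v| ≤ (N : ℤ)
    _ = 2 • ∑ k ∈ range (N + 1), c k - c 0 := sum_Icc_of_even_eq_range hc_even N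
    _ ≤ 4 * N * (Real.log N + 3) := by
        rw [two_nsmul]
        nlinarith

lemma card_quarticPairs_le {H : ℕ} (hH : 1 ≤ H) :
    (#(quarticPairs H) : ℝ) ≤ 4 * H * (Real.log H + 3) := by
  refine le_trans ?_ (card_hyperbola_le hH)
  gcongr
  exact monotone_filter_right _ fun _ _ h ↦ h.2.2

lemma mem_quarticPairs_of_sq_le {H : ℕ} {p v : ℤ} (hp : 0 ≤ p) (hp₂ : 2 * p ^ 2 ≤ H)
    (hv : |v| ≤ H) (hpv : |2 * p * v| ≤ H) : (p, v) ∈ quarticPairs H := by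
  rw [mem_quarticPairs]
  rcases hp.eq_or_lt with rfl | hp₀
  · simpa using hv
  have hpv' : 2 * (p * |v|) ≤ H := by
    rwa [abs_mul, abs_mul, abs_of_pos hp₀, abs_two, mul_assoc] at hpv
  have hv' : |v| ≤ p * |v| := le_mul_of_one_le_left (abs_nonneg v) hp₀
  refine ⟨?_, ?_, ?_⟩
  · rw [abs_of_pos (by positivity)]
    nlinarith
  · have := abs_add_le (p ^ 2) v
    rw [abs_sq] at this
    linarith
  · rw [abs_mul, abs_of_pos hp₀]
    linarith

lemma sum_card_le_card_quarticPairs (H : ℕ) :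
    ∑ k ∈ range (Nat.sqrt (H / 2) + 1), #{v ∈ Icc (-H : ℤ) H | |2 * (k : ℤ) * v| ≤ H}
      ≤ #(quarticPairs H) := by
  rw [← card_filter_product_eq_sum _ _ fun (k : ℕ) (v : ℤ) ↦ |2 * (k : ℤ) * v| ≤ H]
  refine card_le_card_of_injOn (fun x ↦ ((x.1 : ℤ), x.2)) ?_ ?_
  · rintro ⟨k, v⟩ hkv
    simp only [coe_filter, mem_product, mem_range, mem_Icc] at hkv
    have hk : k * k ≤ H / 2 :=
      (Nat.mul_self_le_mul_self (Nat.lt_succ_iff.mp hkv.1.1)).trans (Nat.sqrt_le (H / 2))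
    refine mem_quarticPairs_of_sq_le (by positivity) ?_ (abs_le.mpr hkv.1.2) hkv.2
    have : 2 * (k * k) ≤ H := by omega
    exact_mod_cast (by nlinarith : 2 * k ^ 2 ≤ H)
  · rintro ⟨k, v⟩ - ⟨k', v'⟩ - h
    simp_all

lemma mul_harmonic_add_le_sum_card (H m : ℕ) :
    H * harmonic m + 2 * H - (m + 1) ≤
      ∑ k ∈ range (m + 1), (#{v ∈ Icc (-H : ℤ) H | |2 * (k : ℤ) * v| ≤ H} : ℝ) := by
  set c : ℕ → ℝ := fun k ↦ #{v ∈ Icc (-H : ℤ) H | |2 * (k : ℤ) * v| ≤ H}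
  have hc (k : ℕ) : 2 * H / ((max 1 (2 * k) : ℕ) : ℝ) - 1 ≤ c k := by
    have := (abs_le.mp (abs_card_filter_abs_mul_le_sub_le H (2 * k))).1
    rw [show (2 * (k : ℤ)).natAbs = 2 * k by omega] at this
    linarith
  have hc_succ (k : ℕ) : H * ((k : ℝ) + 1)⁻¹ - 1 ≤ c (k + 1) := by
    convert hc (k + 1) using 2
    rw [max_eq_right (by omega)]
    push_cast
    field_simp
  have hc_zero : 2 * (H : ℝ) - 1 ≤ c 0 := by simpa using hc 0
  calc H * harmonic m + 2 * H - (m + 1)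
      = ∑ k ∈ range m, (H * ((k : ℝ) + 1)⁻¹ - 1) + (2 * H - 1) := by
        rw [sum_sub_distrib, ← mul_sum, harmonic]
        push_cast
        simp only [sum_const, card_range, nsmul_eq_mul, mul_one]
        ring
    _ ≤ ∑ k ∈ range m, c (k + 1) + c 0 :=
        add_le_add (sum_le_sum fun k _ ↦ hc_succ k) hc_zero
    _ = ∑ k ∈ range (m + 1), c k := (sum_range_succ' c m).symm

lemma le_card_quarticPairs {H : ℕ} (hH : 1 ≤ H) :
    (H : ℝ) / 2 * Real.log H ≤ #(quarticPairs H) := by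
  set m := Nat.sqrt (H / 2)
  have hm : (m : ℝ) + 1 ≤ H := by
    have := Nat.sqrt_le_self (H / 2)
    exact_mod_cast (by omega : m + 1 ≤ H)
  have hHm : (H : ℝ) ≤ 2 * (m + 1) ^ 2 := by
    have : H / 2 < (m + 1) ^ 2 := Nat.lt_succ_sqrt' (H / 2)
    exact_mod_cast (by omega : H ≤ 2 * (m + 1) ^ 2)
  have hlog : Real.log H ≤ Real.log 2 + 2 * Real.log (m + 1) := by
    calc Real.log H ≤ Real.log (2 * (m + 1) ^ 2) := Real.log_le_log (by positivity) hHm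
      _ = Real.log 2 + 2 * Real.log (m + 1) := by
        rw [Real.log_mul (by norm_num) (by positivity), Real.log_pow]
        push_cast
        ring
  have hharm : Real.log (m + 1) ≤ harmonic m := by exact_mod_cast log_add_one_le_harmonic m
  have hH' : (1 : ℝ) ≤ H := by exact_mod_cast hH
  calc (H : ℝ) / 2 * Real.log H ≤ H * harmonic m + 2 * H - (m + 1) := by
        nlinarith [Real.log_two_lt_d9]
    _ ≤ _ := mul_harmonic_add_le_sum_card H m
    _ ≤ #(quarticPairs H) := by exact_mod_cast sum_card_le_card_quarticPairs H

theorem stmt_1 :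
    ∃ c₁ c₂ : ℝ, 0 < c₁ ∧ 0 < c₂ ∧ ∀ H : ℕ, 2 ≤ H →
      c₁ * (H : ℝ) ^ 2 * Real.log H ≤ (DMonic 4 2 2 H : ℝ) ∧
      (DMonic 4 2 2 H : ℝ) ≤ c₂ * (H : ℝ) ^ 2 * Real.log H := by
  refine ⟨1, 72, one_pos, by norm_num, fun H hH ↦ ?_⟩
  have hH₁ : 1 ≤ H := by omega
  have hD : (DMonic 4 2 2 H : ℝ) = #(quarticPairs H) * (2 * H + 1) := by
    rw [DMonic_four_two_two_eq hH₁]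
    push_cast
    ring
  have hlower := le_card_quarticPairs hH₁
  have hupper := card_quarticPairs_le hH₁
  have hlog : 0.6 ≤ Real.log H := by
    have := Real.log_le_log two_pos (by exact_mod_cast hH : (2 : ℝ) ≤ H)
    linarith [Real.log_two_gt_d9]
  have hH' : (2 : ℝ) ≤ H := by exact_mod_cast hH
  rw [hD]
  constructor <;> nlinarith
end

section
/- Let d ≥ 4 be an integer and let m, n be integers with m ≥ 2, n ≥ 2 and d = mn. If m(m-1) ≤ 2(n-2), then there exists a constant c > 0 (depending only on d) such that for all integers H ≥ 2, D_d(m,n;H) ≤ c·H^{(m+1)/2 + (n-1)/m}, where the exponent (m+1)/2 + (n-1)/m is a real number. -/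
open Polynomial

/-!
Write `‖p‖` for the height. Normalise a decomposition `f = g ∘ h` so that `g` and `h` are monic
and `h(0) = 0`. For such `h` every shift `h - s` (`s ∈ ℂ`) keeps the largest coefficient of `h`,
so its Mahler measure is at least `2⁻ⁿ ‖h‖`; factoring `u` over `ℂ` then gives
`|lc u| ‖h‖^(deg u) ≤ 2^(n deg u) M(u ∘ h)`, and Landau's inequality bounds `M(u ∘ h)` by a
multiple of `‖u ∘ h‖`.
Applied to `u = g` this gives `‖h‖^m ≲ H`, and applied to differences `g₁ - g₂` of admissible `g`
with the same `h` it confines them to a lattice box with sides `≲ H / ‖h‖^k` (`k < m`), so there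
are `≲ H^m / ‖h‖^(m(m-1)/2)` of them. Summing over the `≲ b^(n-2)` normalised `h` of height `b`,
for `b ≲ H^(1/m)`, gives `H^m · H^((n - 1 - m(m-1)/2)/m)`, the claimed bound; `m(m-1) ≤ 2(n-2)`
keeps the exponent of `b` nonnegative.
-/

open Finset

theorem Finset.card_le_of_pairwise_natAbs_sub_le (V : Finset ℤ) (A : ℕ)
    (hV : (V : Set ℤ).Pairwise fun a b => (a - b).natAbs ≤ A) : #V ≤ A + 1 := by
  rcases V.eq_empty_or_nonempty with rfl | hne
  · simp
  have hsub : V ⊆ Icc (V.min' hne) (V.min' hne + A) := by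
    intro a ha
    have hmin := V.min'_le a ha
    rcases eq_or_ne a (V.min' hne) with rfl | hne'
    · simp
    · have := hV ha (V.min'_mem hne) hne'
      rw [mem_Icc]
      omega
  calc #V ≤ #(Icc (V.min' hne) (V.min' hne + A)) := card_le_card hsub
    _ = A + 1 := by rw [Int.card_Icc]; omega

theorem card_piFinset_Icc_sdiff_le (k r : ℕ) :
    #((Fintype.piFinset fun _ : Fin k => Icc (-(r + 1 : ℤ)) (r + 1)) \
      Fintype.piFinset fun _ => Icc (-(r : ℤ)) r) ≤ 2 * k * (2 * r + 3) ^ (k - 1) := by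
  have hsub : (Fintype.piFinset fun _ : Fin k => Icc (-(r : ℤ)) r) ⊆
      Fintype.piFinset fun _ => Icc (-(r + 1 : ℤ)) (r + 1) :=
    Fintype.piFinset_subset _ _ fun _ => Icc_subset_Icc (by omega) (by omega)
  rw [card_sdiff_of_subset hsub]
  simp only [Fintype.card_piFinset, Int.card_Icc, prod_const, card_univ, Fintype.card_fin]
  grind [abs_pow_sub_pow_le (α := ℤ) (2 * r + 3) (2 * r + 1) k]

namespace Polynomial

def height (p : ℤ[X]) : ℕ := p.support.sup fun i => (p.coeff i).natAbs

theorem natAbs_coeff_le_height (p : ℤ[X]) (i : ℕ) : (p.coeff i).natAbs ≤ p.height := by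
  by_cases hi : i ∈ p.support
  · exact Finset.le_sup (f := fun i => (p.coeff i).natAbs) hi
  · simp [notMem_support_iff.mp hi]

theorem height_le_iff {p : ℤ[X]} {B : ℕ} : p.height ≤ B ↔ ∀ i, (p.coeff i).natAbs ≤ B :=
  ⟨fun h i => (natAbs_coeff_le_height p i).trans h, fun h => Finset.sup_le fun i _ => h i⟩

theorem heightLe_iff {p : ℤ[X]} {H : ℕ} : HeightLe p H ↔ p.height ≤ H := by
  simp only [height_le_iff, HeightLe, Int.abs_eq_natAbs, Nat.cast_le]

theorem exists_natAbs_coeff_eq_height (p : ℤ[X]) : ∃ i, (p.coeff i).natAbs = p.height := by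
  rcases p.support.eq_empty_or_nonempty with hp | hp
  · exact ⟨0, by simp [height, support_eq_empty.mp hp]⟩
  · obtain ⟨i, -, hi⟩ := p.support.exists_mem_eq_sup hp fun i => (p.coeff i).natAbs
    exact ⟨i, hi.symm⟩

theorem Monic.one_le_height {p : ℤ[X]} (hp : p.Monic) : 1 ≤ p.height := by
  simpa [hp.coeff_natDegree] using natAbs_coeff_le_height p p.natDegree

theorem height_sub_le (p q : ℤ[X]) : (p - q).height ≤ p.height + q.height :=
  height_le_iff.mpr fun i => by
    rw [coeff_sub]
    exact (Int.natAbs_sub_le _ _).trans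
      (add_le_add (natAbs_coeff_le_height p i) (natAbs_coeff_le_height q i))

theorem norm_coeff_map_intCast (p : ℤ[X]) (i : ℕ) :
    ‖(p.map (Int.castRingHom ℂ)).coeff i‖ = (p.coeff i).natAbs := by
  rw [coeff_map, eq_intCast, Complex.norm_intCast, Nat.cast_natAbs, Int.cast_abs]

theorem natDegree_map_intCast (p : ℤ[X]) : (p.map (Int.castRingHom ℂ)).natDegree = p.natDegree :=
  natDegree_map_eq_of_injective (RingHom.injective_int _) p

theorem mahlerMeasure_map_le_height (p : ℤ[X]) :
    (p.map (Int.castRingHom ℂ)).mahlerMeasure ≤ (p.natDegree + 1) * p.height := by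
  obtain ⟨i, hi⟩ := (p.map (Int.castRingHom ℂ)).exists_eq_supNorm
  have hsup : (p.map (Int.castRingHom ℂ)).supNorm ≤ p.height := by
    rw [hi, norm_coeff_map_intCast]
    exact_mod_cast natAbs_coeff_le_height p i
  calc (p.map (Int.castRingHom ℂ)).mahlerMeasure
      ≤ √(p.natDegree + 1) * (p.map (Int.castRingHom ℂ)).supNorm := by
        simpa only [natDegree_map_intCast] using
          mahlerMeasure_le_sqrt_natDegree_add_one_mul_supNorm (p.map (Int.castRingHom ℂ))
    _ ≤ (p.natDegree + 1) * p.height :=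
        mul_le_mul (Real.sqrt_le_iff.mpr ⟨by positivity, by nlinarith⟩) hsup (supNorm_nonneg _)
          (by positivity)

theorem finite_setOf_natDegree_le_height_le (N H : ℕ) :
    {p : ℤ[X] | p.natDegree ≤ N ∧ p.height ≤ H}.Finite :=
  (finite_mahlerMeasure_le N ((N + 1) * H)).subset fun p ⟨hN, hH⟩ =>
    ⟨hN, (mahlerMeasure_map_le_height p).trans (by push_cast; gcongr)⟩

theorem mahlerMeasure_comp (u h : ℂ[X]) :
    (u.comp h).mahlerMeasure =
      ‖u.leadingCoeff‖ * (u.roots.map fun s => (h - C s).mahlerMeasure).prod := by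
  conv_lhs =>
    rw [← C_leadingCoeff_mul_prod_multiset_X_sub_C (IsAlgClosed.card_roots_eq_natDegree (p := u))]
  simp [mul_comp, multiset_prod_comp, mahlerMeasure_mul, Multiset.map_map]

theorem height_le_two_pow_mul_mahlerMeasure_sub_C {h : ℤ[X]} (h0 : h.coeff 0 = 0) (s : ℂ) :
    (h.height : ℝ) ≤ 2 ^ h.natDegree * (h.map (Int.castRingHom ℂ) - C s).mahlerMeasure := by
  obtain ⟨j, hj⟩ := exists_natAbs_coeff_eq_height h
  rcases j.eq_zero_or_pos with rfl | hj0
  · rw [← hj, h0, Int.natAbs_zero, Nat.cast_zero]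
    exact mul_nonneg (by positivity) (mahlerMeasure_nonneg _)
  have hcoeff :
      (h.map (Int.castRingHom ℂ) - C s).coeff j = (h.map (Int.castRingHom ℂ)).coeff j := by
    rw [coeff_sub, coeff_C, if_neg hj0.ne', sub_zero]
  have hdeg : (h.map (Int.castRingHom ℂ) - C s).natDegree = h.natDegree := by
    rw [natDegree_sub_C, natDegree_map_intCast]
  calc (h.height : ℝ) = ‖(h.map (Int.castRingHom ℂ) - C s).coeff j‖ := by
        rw [hcoeff, norm_coeff_map_intCast, hj]
    _ ≤ (h.natDegree.choose j : ℕ) * (h.map (Int.castRingHom ℂ) - C s).mahlerMeasure := by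
        rw [← hdeg]
        exact norm_coeff_le_choose_mul_mahlerMeasure j _
    _ ≤ 2 ^ h.natDegree * (h.map (Int.castRingHom ℂ) - C s).mahlerMeasure := by
        gcongr
        · exact mahlerMeasure_nonneg _
        · exact_mod_cast Nat.choose_le_two_pow _ _

theorem natAbs_leadingCoeff_mul_height_pow_le_mahlerMeasure {h : ℤ[X]} (h0 : h.coeff 0 = 0)
    (u : ℤ[X]) :
    (u.leadingCoeff.natAbs * h.height ^ u.natDegree : ℝ) ≤
      2 ^ (h.natDegree * u.natDegree) * ((u.comp h).map (Int.castRingHom ℂ)).mahlerMeasure := by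
  set U := u.map (Int.castRingHom ℂ)
  have hcard : U.roots.card = u.natDegree := by
    rw [IsAlgClosed.card_roots_eq_natDegree, natDegree_map_intCast]
  have hlc : ‖U.leadingCoeff‖ = u.leadingCoeff.natAbs := by
    rw [leadingCoeff, natDegree_map_intCast, norm_coeff_map_intCast, leadingCoeff]
  rw [map_comp, mahlerMeasure_comp, hlc]
  calc (u.leadingCoeff.natAbs * h.height ^ u.natDegree : ℝ)
      = u.leadingCoeff.natAbs * (U.roots.map fun _ => (h.height : ℝ)).prod := by
        rw [Multiset.map_const', Multiset.prod_replicate, hcard]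
    _ ≤ u.leadingCoeff.natAbs * (U.roots.map fun s =>
          2 ^ h.natDegree * (h.map (Int.castRingHom ℂ) - C s).mahlerMeasure).prod := by
        gcongr
        exact Multiset.prod_map_le_prod_map₀ _ _ (fun _ _ => by positivity)
          fun s _ => height_le_two_pow_mul_mahlerMeasure_sub_C h0 s
    _ = _ := by
        rw [Multiset.prod_map_mul, Multiset.map_const', Multiset.prod_replicate, hcard, pow_mul]
        ring

theorem natAbs_leadingCoeff_mul_height_pow_le {h : ℤ[X]} (h0 : h.coeff 0 = 0) (u : ℤ[X]) :
    u.leadingCoeff.natAbs * h.height ^ u.natDegree ≤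
      2 ^ (h.natDegree * u.natDegree) * (h.natDegree * u.natDegree + 1) * (u.comp h).height := by
  have hM := mahlerMeasure_map_le_height (u.comp h)
  rw [natDegree_comp, mul_comm u.natDegree] at hM
  have := (natAbs_leadingCoeff_mul_height_pow_le_mahlerMeasure h0 u).trans
    (mul_le_mul_of_nonneg_left hM (by positivity))
  rw [← mul_assoc] at this
  exact_mod_cast this

theorem Monic.height_pow_le_height_comp {g h : ℤ[X]} (hg : g.Monic) (h0 : h.coeff 0 = 0) :
    h.height ^ g.natDegree ≤
      2 ^ (h.natDegree * g.natDegree) * (h.natDegree * g.natDegree + 1) * (g.comp h).height := by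
  simpa [hg.leadingCoeff] using natAbs_leadingCoeff_mul_height_pow_le h0 g

theorem exists_monic_comp_eq_of_monic {f g h : ℤ[X]} (hf : f.Monic) (hg : g.natDegree ≠ 0)
    (hh : h.natDegree ≠ 0) (hfgh : f = g.comp h) :
    ∃ g' h' : ℤ[X], g'.Monic ∧ h'.Monic ∧ h'.coeff 0 = 0 ∧ g'.natDegree = g.natDegree ∧
      h'.natDegree = h.natDegree ∧ f = g'.comp h' := by
  set ε := h.leadingCoeff
  have hε : ε * ε = 1 := by
    have hlc : ε ^ g.natDegree * g.leadingCoeff = 1 := by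
      rw [mul_comm, ← leadingCoeff_comp hh, ← hfgh, hf.leadingCoeff]
    exact Int.isUnit_mul_self ((isUnit_pow_iff hg).mp (IsUnit.of_mul_eq_one _ hlc))
  have hε0 : ε ≠ 0 := left_ne_zero_of_mul_eq_one hε
  set h' := C ε * (h - C (h.coeff 0))
  have hh' : h'.natDegree = h.natDegree := by rw [natDegree_C_mul hε0, natDegree_sub_C]
  have hh'monic : h'.Monic := by
    rw [Monic, leadingCoeff, hh', coeff_C_mul, coeff_sub, coeff_C, if_neg hh, sub_zero]
    exact hε
  have hcomp : (C ε * X + C (h.coeff 0)).comp h' = h := by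
    simp only [h', add_comp, mul_comp, C_comp, X_comp, ← mul_assoc, ← C_mul, hε, C_1, one_mul,
      sub_add_cancel]
  have hfe : f = (g.comp (C ε * X + C (h.coeff 0))).comp h' := by rw [comp_assoc, hcomp, hfgh]
  refine ⟨g.comp (C ε * X + C (h.coeff 0)), h', ?_, hh'monic, ?_, ?_, hh', hfe⟩
  · have hlc := leadingCoeff_comp (p := g.comp (C ε * X + C (h.coeff 0))) (hh' ▸ hh)
    rwa [hh'monic.leadingCoeff, one_pow, mul_one, ← hfe, hf.leadingCoeff, eq_comm] at hlc
  · rw [coeff_C_mul, coeff_sub, coeff_C_zero, sub_self, mul_zero]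
  · rw [natDegree_comp, natDegree_linear hε0, mul_one]

theorem Monic.natDegree_sub_lt {R : Type*} [Ring R] [Nontrivial R] {v w : R[X]} (hv : v.Monic)
    (hw : w.Monic) (hd : v.natDegree = w.natDegree) (hvw : v ≠ w) :
    (v - w).natDegree < v.natDegree :=
  natDegree_lt_natDegree (sub_ne_zero.mpr hvw) <| degree_sub_lt_left
    (by rw [degree_eq_natDegree hv.ne_zero, degree_eq_natDegree hw.ne_zero, hd]) hv.ne_zero
    (by rw [hv.leadingCoeff, hw.leadingCoeff])

theorem card_le_prod_of_pairwise_natAbs_leadingCoeff_sub_le (A : ℕ → ℕ) (J : ℕ)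
    (V : Finset ℤ[X])
    (hV : (V : Set ℤ[X]).Pairwise fun v w =>
      (v - w).natDegree < J ∧ (v - w).leadingCoeff.natAbs ≤ A (v - w).natDegree) :
    #V ≤ ∏ k ∈ range J, (A k + 1) := by
  induction J generalizing V with
  | zero =>
    rw [prod_range_zero, card_le_one]
    by_contra! ⟨v, hv, w, hw, hvw⟩
    exact Nat.not_lt_zero _ (hV hv hw hvw).1
  | succ J ih =>
    -- Split `V` by the coefficient of `X ^ J`; two distinct values of it are the leading
    -- coefficient of a difference of degree `J`.
    rw [prod_range_succ]
    refine card_le_mul_card_image (f := fun v : ℤ[X] => v.coeff J) V _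
      (fun c _ => ih _ fun v hv w hw hvw => ?_) |>.trans ?_
    · simp only [coe_filter, Set.mem_ofPred_eq] at hv hw
      obtain ⟨hdeg, hlc⟩ := hV hv.1 hw.1 hvw
      refine ⟨(Nat.lt_succ_iff.mp hdeg).lt_of_ne fun hJ => sub_ne_zero.mpr hvw ?_, hlc⟩
      rw [← leadingCoeff_eq_zero, leadingCoeff, hJ, coeff_sub, hv.2, hw.2, sub_self]
    · gcongr
      refine card_le_of_pairwise_natAbs_sub_le _ _ fun c hc d hd hcd => ?_
      obtain ⟨v, hv, rfl⟩ := mem_image.mp hc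
      obtain ⟨w, hw, rfl⟩ := mem_image.mp hd
      have hvw : v ≠ w := fun h => hcd (h ▸ rfl)
      have hcoeff : (v - w).coeff J ≠ 0 := by rwa [coeff_sub, sub_ne_zero]
      obtain ⟨hdeg, hlc⟩ := hV hv hw hvw
      have hJ : (v - w).natDegree = J := le_antisymm (Nat.lt_succ_iff.mp hdeg)
        (le_natDegree_of_ne_zero hcoeff)
      rwa [leadingCoeff, hJ, coeff_sub] at hlc

theorem card_mul_height_pow_le {h : ℤ[X]} (hh : h.Monic) (h0 : h.coeff 0 = 0) {m H : ℕ}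
    (G : Finset ℤ[X]) (hG : ∀ g ∈ G, g.Monic ∧ g.natDegree = m ∧ (g.comp h).height ≤ H) :
    #G * h.height ^ (m * (m - 1) / 2) ≤
      (3 * (2 ^ (h.natDegree * m) * (h.natDegree * m + 1)) * H) ^ m := by
  set B := h.height
  set C := 2 ^ (h.natDegree * m) * (h.natDegree * m + 1)
  rcases G.eq_empty_or_nonempty with rfl | ⟨g, hg⟩
  · simp
  have hC {k : ℕ} (hk : k ≤ m) : 2 ^ (h.natDegree * k) * (h.natDegree * k + 1) ≤ C := by
    have := Nat.mul_le_mul_left h.natDegree hk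
    exact Nat.mul_le_mul (Nat.pow_le_pow_right two_pos this) (by omega)
  have hBm : B ^ m ≤ C * H := by
    obtain ⟨hgm, rfl, hgH⟩ := hG g hg
    exact (hgm.height_pow_le_height_comp h0).trans (Nat.mul_le_mul_left _ hgH)
  have hcard := card_le_prod_of_pairwise_natAbs_leadingCoeff_sub_le
    (fun k => 2 * C * H / B ^ k) m G fun v hv w hw hvw => by
      obtain ⟨hvm, hvd, hvH⟩ := hG v hv
      obtain ⟨hwm, hwd, hwH⟩ := hG w hw
      have hdeg : (v - w).natDegree < m :=
        hvd ▸ hvm.natDegree_sub_lt hwm (hvd.trans hwd.symm) hvw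
      refine ⟨hdeg, (Nat.le_div_iff_mul_le (pow_pos hh.one_le_height _)).mpr ?_⟩
      calc (v - w).leadingCoeff.natAbs * B ^ (v - w).natDegree
          ≤ 2 ^ (h.natDegree * (v - w).natDegree) * (h.natDegree * (v - w).natDegree + 1) *
              ((v - w).comp h).height := natAbs_leadingCoeff_mul_height_pow_le h0 _
        _ ≤ C * (H + H) := by
            rw [sub_comp]
            exact Nat.mul_le_mul (hC hdeg.le) ((height_sub_le _ _).trans (add_le_add hvH hwH))
        _ = 2 * C * H := by ring
  calc #G * B ^ (m * (m - 1) / 2)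
      ≤ (∏ k ∈ range m, (2 * C * H / B ^ k + 1)) * ∏ k ∈ range m, B ^ k := by
        rw [prod_pow_eq_pow_sum, sum_range_id]
        exact Nat.mul_le_mul_right _ hcard
    _ = ∏ k ∈ range m, ((2 * C * H / B ^ k + 1) * B ^ k) := prod_mul_distrib.symm
    _ ≤ ∏ k ∈ range m, (3 * C * H) := by
        refine prod_le_prod' fun k hk => ?_
        have hBk : B ^ k ≤ C * H :=
          (Nat.pow_le_pow_right hh.one_le_height (mem_range.mp hk).le).trans hBm
        calc (2 * C * H / B ^ k + 1) * B ^ k = 2 * C * H / B ^ k * B ^ k + B ^ k := by ring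
          _ ≤ 2 * C * H + C * H := add_le_add (Nat.div_mul_le_self _ _) hBk
          _ = 3 * C * H := by ring
    _ = (3 * C * H) ^ m := by rw [prod_const, card_range]

theorem card_le_of_height_eq {n b : ℕ} (hn : 2 ≤ n) (hb : 1 ≤ b) (V : Finset ℤ[X])
    (hV : ∀ h ∈ V, h.Monic ∧ h.natDegree = n ∧ h.coeff 0 = 0 ∧ h.height = b) :
    #V ≤ 2 * n * 3 ^ (n - 2) * b ^ (n - 2) := by
  set box : ℕ → Finset (Fin (n - 1) → ℤ) := fun r =>
    Fintype.piFinset fun _ => Icc (-(r : ℤ)) r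
  set enc : ℤ[X] → Fin (n - 1) → ℤ := fun h i => h.coeff (i + 1)
  have henc : Set.InjOn enc V := by
    intro p hp q hq hpq
    obtain ⟨hpm, hpd, hp0, -⟩ := hV p hp
    obtain ⟨hqm, hqd, hq0, -⟩ := hV q hq
    ext i
    rcases Nat.lt_or_ge n i with hi | hi
    · rw [coeff_eq_zero_of_natDegree_lt (hpd ▸ hi), coeff_eq_zero_of_natDegree_lt (hqd ▸ hi)]
    rcases hi.eq_or_lt with rfl | hi
    · exact (hpd ▸ hpm.coeff_natDegree).trans (hqd ▸ hqm.coeff_natDegree).symm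
    rcases i with _ | i
    · rw [hp0, hq0]
    · exact congrFun hpq ⟨i, by omega⟩
  have hbox (h : ℤ[X]) (hh : h ∈ V) : enc h ∈ box b := by
    rw [Fintype.mem_piFinset]
    intro i
    have := natAbs_coeff_le_height h (i + 1)
    rw [(hV h hh).2.2.2] at this
    simp only [enc, mem_Icc]
    omega
  rw [← card_image_of_injOn henc]
  obtain rfl | ⟨r, rfl⟩ : b = 1 ∨ ∃ r, b = r + 2 := by
    rcases b with _ | _ | r <;> simp_all
  · calc #(V.image enc) ≤ #(box 1) := card_le_card (image_subset_iff.mpr hbox)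
      _ = 3 * 3 ^ (n - 2) := by
        simp only [box, Fintype.card_piFinset, Int.card_Icc, prod_const, card_univ,
          Fintype.card_fin, ← pow_succ']
        congr 1; omega
      _ ≤ 2 * n * 3 ^ (n - 2) * 1 ^ (n - 2) := by rw [one_pow, mul_one]; gcongr; omega
  -- The extreme coefficients are `0` and `1`, so a height `≥ 2` is attained in the middle.
  · have hshell : V.image enc ⊆ box (r + 2) \ box (r + 1) := by
      refine image_subset_iff.mpr fun h hh => mem_sdiff.mpr ⟨hbox h hh, fun hsmall => ?_⟩
      obtain ⟨hm, hd, h0, hb⟩ := hV h hh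
      obtain ⟨j, hj⟩ := exists_natAbs_coeff_eq_height h
      have hj0 : j ≠ 0 := by rintro rfl; rw [h0] at hj; omega
      have hjn : j < n := by
        refine lt_of_le_of_ne ?_ fun hjn => ?_
        · exact hd ▸ le_natDegree_of_ne_zero fun hc => by rw [hc] at hj; omega
        · rw [hjn, ← hd, hm.coeff_natDegree] at hj; omega
      have := Fintype.mem_piFinset.mp hsmall ⟨j - 1, by omega⟩
      simp only [enc, mem_Icc, Nat.sub_add_cancel (Nat.one_le_iff_ne_zero.mpr hj0)] at this
      omega
    calc #(V.image enc) ≤ #(box (r + 2) \ box (r + 1)) := card_le_card hshell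
      _ ≤ 2 * (n - 1) * (2 * (r + 1) + 3) ^ (n - 1 - 1) := by
        have := card_piFinset_Icc_sdiff_le (n - 1) (r + 1)
        rwa [show ((r + 1 : ℕ) : ℤ) + 1 = ((r + 2 : ℕ) : ℤ) by push_cast; ring] at this
      _ ≤ 2 * n * 3 ^ (n - 2) * (r + 2) ^ (n - 2) := by
        rw [mul_assoc _ (3 ^ _), ← mul_pow, show n - 1 - 1 = n - 2 by omega]
        gcongr <;> omega

theorem sum_le_of_mul_height_pow_le {n M β X : ℕ} (hn : 2 ≤ n) (hM : M ≤ n - 2)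
    (S : Finset ℤ[X]) (hS : ∀ h ∈ S, h.Monic ∧ h.natDegree = n ∧ h.coeff 0 = 0 ∧ h.height ≤ β)
    (N : ℤ[X] → ℕ) (hN : ∀ h ∈ S, N h * h.height ^ M ≤ X) :
    ∑ h ∈ S, N h ≤ 2 * n * 3 ^ (n - 2) * X * β ^ (n - 1 - M) := by
  set K := 2 * n * 3 ^ (n - 2)
  have hlevel (b : ℕ) (hb : b ∈ Icc 1 β) :
      ∑ h ∈ S with h.height = b, N h ≤ K * X * b ^ (n - 2 - M) := by
    have hb1 : 1 ≤ b := (mem_Icc.mp hb).1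
    have hcard := card_le_of_height_eq hn hb1 {h ∈ S | h.height = b} fun h hh => by
      obtain ⟨hhS, hhb⟩ := mem_filter.mp hh
      obtain ⟨hm, hd, h0, -⟩ := hS h hhS
      exact ⟨hm, hd, h0, hhb⟩
    refine Nat.le_of_mul_le_mul_right ?_ (pow_pos hb1 M)
    calc (∑ h ∈ S with h.height = b, N h) * b ^ M
        = ∑ h ∈ S with h.height = b, N h * h.height ^ M := by
          rw [sum_mul]
          exact sum_congr rfl fun h hh => by rw [(mem_filter.mp hh).2]
      _ ≤ #{h ∈ S | h.height = b} * X := by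
          rw [← smul_eq_mul, ← sum_const]
          exact sum_le_sum fun h hh => hN h (mem_filter.mp hh).1
      _ ≤ K * b ^ (n - 2) * X := Nat.mul_le_mul_right X hcard
      _ = K * X * b ^ (n - 2 - M) * b ^ M := by
          rw [mul_assoc (K * X), ← pow_add, Nat.sub_add_cancel hM]; ring
  calc ∑ h ∈ S, N h = ∑ b ∈ Icc 1 β, ∑ h ∈ S with h.height = b, N h :=
        (sum_fiberwise_of_maps_to (fun h hh => mem_Icc.mpr
          ⟨(hS h hh).1.one_le_height, (hS h hh).2.2.2⟩) N).symm
    _ ≤ ∑ b ∈ Icc 1 β, K * X * β ^ (n - 2 - M) :=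
        sum_le_sum fun b hb => (hlevel b hb).trans (by gcongr; exact (mem_Icc.mp hb).2)
    _ = K * X * β ^ (n - 1 - M) := by
        rw [sum_const, Nat.card_Icc, Nat.add_sub_cancel, smul_eq_mul,
          show n - 1 - M = n - 2 - M + 1 by omega, pow_succ]
        ring

end Polynomial

theorem dMonic_mul_le {m n H β : ℕ} (hm : 1 ≤ m) (hn : 2 ≤ n) (hM : m * (m - 1) / 2 ≤ n - 2)
    (hβ : ∀ b, b ^ m ≤ 2 ^ (n * m) * (n * m + 1) * H → b ≤ β) :
    DMonic (m * n) m n H ≤ 2 * n * 3 ^ (n - 2) * (3 * (2 ^ (n * m) * (n * m + 1)) * H) ^ m *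
      β ^ (n - 1 - m * (m - 1) / 2) := by
  classical
  set S := {f : ℤ[X] | f.Monic ∧ f.natDegree = m * n ∧ HeightLe f H ∧
    ∃ g h : ℤ[X], g.natDegree = m ∧ h.natDegree = n ∧ f = g.comp h}
  have hfin : S.Finite := (finite_setOf_natDegree_le_height_le (m * n) H).subset
    fun f hf => ⟨hf.2.1.le, heightLe_iff.mp hf.2.2.1⟩
  have hdecomp : ∀ f ∈ hfin.toFinset, (f.height ≤ H) ∧ ∃ g h : ℤ[X], g.Monic ∧ h.Monic ∧
      h.coeff 0 = 0 ∧ g.natDegree = m ∧ h.natDegree = n ∧ f = g.comp h := by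
    intro f hf
    obtain ⟨hfm, -, hfH, g, h, rfl, rfl, hfgh⟩ := hfin.mem_toFinset.mp hf
    exact ⟨heightLe_iff.mp hfH, exists_monic_comp_eq_of_monic hfm (by omega) (by omega) hfgh⟩
  choose! hH g h hg hh h0 hgdeg hhdeg hfgh using hdecomp
  change Nat.card S ≤ _
  rw [Nat.card_coe_set_eq, Set.ncard_eq_toFinset_card S hfin,
    card_eq_sum_card_image h hfin.toFinset]
  refine sum_le_of_mul_height_pow_le hn hM _ (fun h' hh' => ?_) _ fun h' hh' => ?_
  all_goals obtain ⟨f, hf, rfl⟩ := mem_image.mp hh'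
  · refine ⟨hh f hf, hhdeg f hf, h0 f hf, hβ _ ?_⟩
    have := (hg f hf).height_pow_le_height_comp (h0 f hf)
    rw [hgdeg f hf, hhdeg f hf, ← hfgh f hf] at this
    exact this.trans (Nat.mul_le_mul_left _ (hH f hf))
  · have hinj : Set.InjOn g ↑({f' ∈ hfin.toFinset | h f' = h f}) := by
      intro f₁ hf₁ f₂ hf₂ hg₁₂
      rw [coe_filter] at hf₁ hf₂
      rw [hfgh f₁ hf₁.1, hfgh f₂ hf₂.1, hg₁₂, hf₁.2, hf₂.2]
    rw [← card_image_of_injOn hinj, ← hhdeg f hf]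
    refine card_mul_height_pow_le (hh f hf) (h0 f hf) _ fun g' hg' => ?_
    obtain ⟨f', hf', rfl⟩ := mem_image.mp hg'
    obtain ⟨hf'S, hf'h⟩ := mem_filter.mp hf'
    exact ⟨hg f' hf'S, hgdeg f' hf'S, hf'h ▸ hfgh f' hf'S ▸ hH f' hf'S⟩

theorem le_floor_rpow_inv_of_pow_le {b m Y : ℕ} (hm : m ≠ 0) (h : b ^ m ≤ Y) :
    b ≤ ⌊(Y : ℝ) ^ ((m : ℝ)⁻¹)⌋₊ := by
  refine Nat.le_floor ?_
  rw [← Real.pow_rpow_inv_natCast b.cast_nonneg hm]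
  exact Real.rpow_le_rpow (by positivity) (by exact_mod_cast h) (by positivity)

theorem pow_mul_floor_rpow_inv_pow_le (C H m e : ℕ) (hm : m ≠ 0) :
    ((3 * C * H) ^ m * ⌊((C * H : ℕ) : ℝ) ^ ((m : ℝ)⁻¹)⌋₊ ^ e : ℝ) ≤
      (3 * C) ^ m * (C : ℝ) ^ ((e : ℝ) / m) * (H : ℝ) ^ ((m : ℝ) + e / m) := by
  have hfloor : (⌊((C * H : ℕ) : ℝ) ^ ((m : ℝ)⁻¹)⌋₊ : ℝ) ≤ ((C * H : ℕ) : ℝ) ^ ((m : ℝ)⁻¹) :=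
    Nat.floor_le (by positivity)
  calc ((3 * C * H) ^ m * ⌊((C * H : ℕ) : ℝ) ^ ((m : ℝ)⁻¹)⌋₊ ^ e : ℝ)
      ≤ (3 * C * H) ^ m * (((C * H : ℕ) : ℝ) ^ ((m : ℝ)⁻¹)) ^ e := by gcongr
    _ = (3 * C) ^ m * (C : ℝ) ^ ((e : ℝ) / m) * (H : ℝ) ^ ((m : ℝ) + e / m) := by
      have hm' : (m : ℝ) + e / m ≠ 0 := by positivity
      rw [← Real.rpow_natCast _ e, ← Real.rpow_mul (by positivity), Nat.cast_mul,
        Real.mul_rpow (by positivity) (by positivity), Real.rpow_add' (by positivity) hm',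
        Real.rpow_natCast, inv_mul_eq_div]
      ring

theorem natCast_add_sub_div_eq {m n : ℕ} (hm : m ≠ 0) (hn : 2 ≤ n)
    (hM : m * (m - 1) / 2 ≤ n - 2) :
    (m : ℝ) + ((n - 1 - m * (m - 1) / 2 : ℕ) : ℝ) / m = ((m : ℝ) + 1) / 2 + ((n : ℝ) - 1) / m := by
  have hM2 : ((m * (m - 1) / 2 : ℕ) : ℝ) = m * ((m : ℝ) - 1) / 2 := by
    rw [Nat.cast_div (Nat.even_mul_pred_self m).two_dvd two_ne_zero, Nat.cast_mul,
      Nat.cast_pred (by omega), Nat.cast_two]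
  rw [Nat.cast_sub (by omega), Nat.cast_sub (by omega), hM2, Nat.cast_one]
  field_simp
  ring

theorem stmt_3_general (d m n : ℕ) (hm : 2 ≤ m) (hn : 2 ≤ n) (hmn : d = m * n)
    (hcond : m * (m - 1) ≤ 2 * (n - 2)) :
    ∃ c : ℝ, 0 < c ∧ ∀ H : ℕ, 2 ≤ H →
      (DMonic d m n H : ℝ) ≤ c * (H : ℝ) ^ (((m : ℝ) + 1) / 2 + ((n : ℝ) - 1) / m) := by
  subst hmn
  have hm0 : m ≠ 0 := by omega
  have hM : m * (m - 1) / 2 ≤ n - 2 := by omega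
  set C := 2 ^ (n * m) * (n * m + 1)
  set e := n - 1 - m * (m - 1) / 2
  refine ⟨2 * n * 3 ^ (n - 2) * ((3 * C) ^ m * (C : ℝ) ^ ((e : ℝ) / m)), by positivity,
    fun H _ => ?_⟩
  have hcount := dMonic_mul_le (H := H) (by omega) hn hM fun b hb =>
    le_floor_rpow_inv_of_pow_le hm0 hb
  calc (DMonic (m * n) m n H : ℝ)
      ≤ 2 * n * 3 ^ (n - 2) * ((3 * C * H) ^ m * ⌊((C * H : ℕ) : ℝ) ^ ((m : ℝ)⁻¹)⌋₊ ^ e) := by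
        rw [← mul_assoc]
        exact_mod_cast hcount
    _ ≤ 2 * n * 3 ^ (n - 2) * ((3 * C) ^ m * (C : ℝ) ^ ((e : ℝ) / m) * H ^ ((m : ℝ) + e / m)) :=
        mul_le_mul_of_nonneg_left (pow_mul_floor_rpow_inv_pow_le C H m e hm0) (by positivity)
    _ = _ := by rw [natCast_add_sub_div_eq hm0 hn hM]; ring

theorem stmt_3 (d m n : ℕ) (hd : 4 ≤ d) (hm : 2 ≤ m) (hn : 2 ≤ n) (hmn : d = m * n)
    (hcond : m * (m - 1) ≤ 2 * (n - 2)) :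
    ∃ c : ℝ, 0 < c ∧ ∀ H : ℕ, 2 ≤ H →
      (DMonic d m n H : ℝ) ≤ c * (H : ℝ) ^ (((m : ℝ) + 1) / 2 + ((n : ℝ) - 1) / m) :=
  stmt_3_general d m n hm hn hmn hcond
end

section
/- There exist constants c₁, c₂ > 0 such that for all integers H ≥ 2, c₁·H²·log H ≤ D_4(H) ≤ c₂·H²·log H, where D_4(H) is the number of decomposable monic polynomials in ℤ[x] of degree 4 and height at most H, and log denotes the natural logarithm. -/
/-!
A decomposable monic quartic is `g ∘ h` with `g`, `h` quadratic and `lc g * (lc h) ^ 2 = 1`, so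
`lc h = ±1`; absorbing that sign and the constant term of `h` into `g` puts it in the unique normal
form `(X ^ 2 + r X + s) ∘ (X ^ 2 + b X) = X ^ 4 + 2b X ^ 3 + (b ^ 2 + r) X ^ 2 + br X + s`.
Hence `D₄(H)` is `2H + 1` (the choices of `s`) times the number of pairs `(b, r)` with
`|2b|, |b ^ 2 + r|, |br| ≤ H`. These pairs lie in the box `|b|, |r| ≤ H` under the hyperbola
`|br| ≤ H`, and contain the pairs `1 ≤ b ≤ √(H/2)`, `1 ≤ r`, `br ≤ H/2`; both sets are counted
by sums `∑ₘ ⌊N/m⌋`, which are of order `N log N` by the bounds on harmonic numbers.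
-/

open Polynomial

/-- A polynomial is decomposable if it is a composition of two polynomials of degree `≥ 2`. -/
def Decomposable (f : ℤ[X]) : Prop :=
  ∃ g h : ℤ[X], 2 ≤ g.natDegree ∧ 2 ≤ h.natDegree ∧ f = g.comp h

/-- `DdMonic d H` is the number of decomposable monic integer polynomials of degree `d`
and height at most `H`. -/
noncomputable def DdMonic (d : ℕ) (H : ℕ) : ℕ :=
  Nat.card {f : ℤ[X] // f.Monic ∧ f.natDegree = d ∧ HeightLe f H ∧ Decomposable f}

namespace Polynomial

variable {R : Type*} [Semiring R]

theorem monic_X_sq_add_C_mul_X_add_C [Nontrivial R] (a c : R) :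
    (X ^ 2 + C a * X + C c : R[X]).Monic := by
  simpa [Monic] using leadingCoeff_quadratic (R := R) (b := a) (c := c) one_ne_zero

theorem monic_X_sq_add_C_mul_X [Nontrivial R] (a : R) :
    (X ^ 2 + C a * X : R[X]).Monic := by
  simpa using monic_X_sq_add_C_mul_X_add_C a 0

theorem natDegree_X_sq_add_C_mul_X_add_C [Nontrivial R] (a c : R) :
    (X ^ 2 + C a * X + C c : R[X]).natDegree = 2 := by
  simpa using natDegree_quadratic (R := R) (b := a) (c := c) one_ne_zero

theorem natDegree_X_sq_add_C_mul_X [Nontrivial R] (a : R) :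
    (X ^ 2 + C a * X : R[X]).natDegree = 2 := by
  simpa using natDegree_X_sq_add_C_mul_X_add_C a 0

theorem eq_quadratic_of_natDegree_le_two {p : R[X]} (hp : p.natDegree ≤ 2) :
    p = C (p.coeff 2) * X ^ 2 + C (p.coeff 1) * X + C (p.coeff 0) := by
  conv_lhs => rw [as_sum_range_C_mul_X_pow' p (Nat.lt_succ_of_le hp)]
  simp only [Finset.sum_range_succ, Finset.sum_range_zero, pow_zero, pow_one, mul_one, zero_add]
  abel

theorem Monic.eq_X_sq_add_C_mul_X_add_C {p : R[X]} (hp : p.Monic)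
    (hd : p.natDegree = 2) : p = X ^ 2 + C (p.coeff 1) * X + C (p.coeff 0) := by
  have h2 : p.coeff 2 = 1 := hd ▸ hp.coeff_natDegree
  simpa [h2] using eq_quadratic_of_natDegree_le_two hd.le

end Polynomial

noncomputable def normalQuartic (b r s : ℤ) : ℤ[X] :=
  (X ^ 2 + C r * X + C s).comp (X ^ 2 + C b * X)

theorem normalQuartic_eq (b r s : ℤ) : normalQuartic b r s =
    X ^ 4 + C (2 * b) * X ^ 3 + C (b ^ 2 + r) * X ^ 2 + C (b * r) * X + C s := by
  simp only [normalQuartic, add_comp, mul_comp, pow_comp, X_comp, C_comp, C_mul, C_add, C_pow,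
    C_ofNat]
  ring

theorem monic_normalQuartic (b r s : ℤ) : (normalQuartic b r s).Monic :=
  (monic_X_sq_add_C_mul_X_add_C r s).comp (monic_X_sq_add_C_mul_X b)
    (by rw [natDegree_X_sq_add_C_mul_X]; norm_num)

theorem natDegree_normalQuartic (b r s : ℤ) : (normalQuartic b r s).natDegree = 4 := by
  rw [normalQuartic, natDegree_comp, natDegree_X_sq_add_C_mul_X_add_C, natDegree_X_sq_add_C_mul_X]

theorem decomposable_normalQuartic (b r s : ℤ) : Decomposable (normalQuartic b r s) :=
  ⟨_, _, (natDegree_X_sq_add_C_mul_X_add_C r s).ge, (natDegree_X_sq_add_C_mul_X b).ge, rfl⟩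

theorem coeff_normalQuartic (b r s : ℤ) (n : ℕ) :
    (normalQuartic b r s).coeff n =
      if n = 0 then s else if n = 1 then b * r else if n = 2 then b ^ 2 + r
      else if n = 3 then 2 * b else if n = 4 then 1 else 0 := by
  simp only [normalQuartic_eq, coeff_add, coeff_C_mul, coeff_X_pow, coeff_C, coeff_X]
  rcases n with _ | _ | _ | _ | _ | n <;> simp

theorem exists_eq_normalQuartic {f : ℤ[X]} (hm : f.Monic) (hd : f.natDegree = 4)
    (hf : Decomposable f) : ∃ b r s, f = normalQuartic b r s := by
  obtain ⟨g, h, hg, hh, rfl⟩ := hf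
  rw [natDegree_comp] at hd
  have hg2 : g.natDegree = 2 := by nlinarith
  have hh2 : h.natDegree = 2 := by nlinarith
  set α := h.leadingCoeff
  have hlc : g.leadingCoeff * α ^ 2 = 1 := by
    rw [← hg2, ← leadingCoeff_comp (by omega)]; exact hm
  have hα : α ^ 2 = 1 :=
    Int.isUnit_sq (.of_mul_eq_one (g.leadingCoeff * α) (by linear_combination hlc))
  have hα0 : α ≠ 0 := by rintro h0; simp [h0] at hα
  set ℓ : ℤ[X] := C α * X + C (h.coeff 0)
  have hℓ : ℓ.natDegree = 1 := natDegree_linear hα0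
  -- As `α ^ 2 = 1`, `α X ^ 2 + β X + γ = (α X + γ) ∘ (X ^ 2 + α β X)`.
  have hh : h = ℓ.comp (X ^ 2 + C (α * h.coeff 1) * X) := by
    have h2 : h.coeff 2 = α := by rw [← hh2]; rfl
    have hCα : C α ^ 2 = 1 := by rw [← C_pow, hα, C_1]
    conv_lhs => rw [eq_quadratic_of_natDegree_le_two hh2.le, h2]
    simp only [ℓ, add_comp, mul_comp, C_comp, X_comp, C_mul]
    linear_combination (-C (h.coeff 1) * X) * hCα
  have hg₁ : (g.comp ℓ).Monic := by
    rw [Monic.def, leadingCoeff_comp (by omega), hg2, leadingCoeff_linear hα0]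
    exact hlc
  have hg₁2 : (g.comp ℓ).natDegree = 2 := by rw [natDegree_comp, hg2, hℓ]
  refine ⟨α * h.coeff 1, (g.comp ℓ).coeff 1, (g.comp ℓ).coeff 0, ?_⟩
  conv_lhs => rw [hh, ← comp_assoc, hg₁.eq_X_sq_add_C_mul_X_add_C hg₁2]
  rfl

theorem normalQuartic_injective :
    Function.Injective fun x : (ℤ × ℤ) × ℤ => normalQuartic x.1.1 x.1.2 x.2 := by
  rintro ⟨⟨b, r⟩, s⟩ ⟨⟨b', r'⟩, s'⟩ he
  have h3 := congrArg (coeff · 3) he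
  have h2 := congrArg (coeff · 2) he
  have h0 := congrArg (coeff · 0) he
  simp only [coeff_normalQuartic, Nat.reduceEqDiff, reduceIte] at h3 h2 h0
  obtain rfl : b = b' := by omega
  obtain rfl : r = r' := by omega
  rw [h0]

open Finset Real

def hyperbolaPoints (M N : ℕ) : Finset (ℕ × ℕ) := {p ∈ Icc 1 M ×ˢ Icc 1 N | p.1 * p.2 ≤ N}

theorem card_hyperbolaPoints (M N : ℕ) : #(hyperbolaPoints M N) = ∑ m ∈ Icc 1 M, N / m := by
  rw [hyperbolaPoints, card_filter, sum_product]
  refine sum_congr rfl fun m hm => ?_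
  have hm : 0 < m := (mem_Icc.1 hm).1
  have hfib : {k ∈ Icc 1 N | m * k ≤ N} = Icc 1 (N / m) := by
    ext k
    simp only [mem_filter, mem_Icc, Nat.le_div_iff_mul_le hm]
    constructor
    · rintro ⟨⟨hk, -⟩, hmk⟩; exact ⟨hk, by linarith⟩
    · rintro ⟨hk, hmk⟩; exact ⟨⟨hk, by nlinarith⟩, by linarith⟩
  rw [← card_filter, hfib, Nat.card_Icc, Nat.add_sub_cancel]

theorem sum_div_le_mul_one_add_log (M N : ℕ) :
    ((∑ m ∈ Icc 1 M, N / m : ℕ) : ℝ) ≤ N * (1 + log M) :=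
  calc ((∑ m ∈ Icc 1 M, N / m : ℕ) : ℝ)
      ≤ ∑ m ∈ Icc 1 M, (N : ℝ) * (m : ℝ)⁻¹ := by
        push_cast
        exact sum_le_sum fun m _ => Nat.cast_div_le
    _ = N * harmonic M := by simp [harmonic_eq_sum_Icc, mul_sum]
    _ ≤ N * (1 + log M) := by gcongr; exact harmonic_le_one_add_log M

theorem mul_log_add_one_le_two_mul_sum_div {M N : ℕ} (h : M ≤ N) :
    N * log (M + 1) ≤ 2 * ((∑ m ∈ Icc 1 M, N / m : ℕ) : ℝ) := by
  have hterm : ∀ m ∈ Icc 1 M, (N : ℝ) * (m : ℝ)⁻¹ ≤ 2 * ((N / m : ℕ) : ℝ) := by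
    intro m hm
    obtain ⟨hm₁, hmM⟩ := mem_Icc.1 hm
    have hq : 1 ≤ N / m := (Nat.one_le_div_iff hm₁).2 (hmM.trans h)
    have hN : N ≤ 2 * (N / m) * m := by
      have := Nat.div_add_mod N m
      have := Nat.mod_lt N hm₁
      nlinarith
    rw [← div_eq_mul_inv, div_le_iff₀ (by positivity)]
    exact_mod_cast hN
  calc (N : ℝ) * log (M + 1)
      ≤ N * harmonic M := by gcongr; exact_mod_cast log_add_one_le_harmonic M
    _ = ∑ m ∈ Icc 1 M, (N : ℝ) * (m : ℝ)⁻¹ := by simp [harmonic_eq_sum_Icc, mul_sum]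
    _ ≤ ∑ m ∈ Icc 1 M, 2 * ((N / m : ℕ) : ℝ) := sum_le_sum hterm
    _ = 2 * ((∑ m ∈ Icc 1 M, N / m : ℕ) : ℝ) := by push_cast; rw [mul_sum]

theorem card_le_four_mul_card_image_natAbs (s : Finset (ℤ × ℤ)) :
    #s ≤ 4 * #(s.image fun x => (x.1.natAbs, x.2.natAbs)) := by
  refine card_le_mul_card_image s 4 fun a _ => ?_
  calc #{x ∈ s | (x.1.natAbs, x.2.natAbs) = a}
      ≤ #(({(a.1 : ℤ), -(a.1 : ℤ)} : Finset ℤ) ×ˢ ({(a.2 : ℤ), -(a.2 : ℤ)} : Finset ℤ)) := by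
        refine card_le_card fun x hx => ?_
        obtain ⟨-, hxa⟩ := mem_filter.1 hx
        rw [← hxa]
        simp only [mem_product, mem_insert, mem_singleton]
        exact ⟨Int.natAbs_eq x.1, Int.natAbs_eq x.2⟩
    _ ≤ 2 * 2 := by rw [card_product]; exact Nat.mul_le_mul card_le_two card_le_two

noncomputable def admissiblePairs (H : ℕ) : Finset (ℤ × ℤ) :=
  {x ∈ Icc (-H : ℤ) H ×ˢ Icc (-H : ℤ) H | |2 * x.1| ≤ H ∧ |x.1 ^ 2 + x.2| ≤ H ∧ |x.1 * x.2| ≤ H}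

theorem mem_admissiblePairs {H : ℕ} {b r : ℤ} :
    (b, r) ∈ admissiblePairs H ↔ |2 * b| ≤ H ∧ |b ^ 2 + r| ≤ H ∧ |b * r| ≤ H := by
  simp only [admissiblePairs, mem_filter, mem_product, mem_Icc, and_iff_right_iff_imp]
  rintro ⟨hb, hbr, hr⟩
  have hr' : |r| ≤ H := by
    rcases eq_or_ne b 0 with rfl | hb0
    · simpa using hbr
    · calc |r| ≤ |b| * |r| := le_mul_of_one_le_left (abs_nonneg r) (Int.one_le_abs hb0)
        _ = |b * r| := (abs_mul b r).symm
        _ ≤ H := hr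
  obtain ⟨hb₁, hb₂⟩ := abs_le.1 hb
  obtain ⟨hr₁, hr₂⟩ := abs_le.1 hr'
  omega

theorem heightLe_normalQuartic_iff {H : ℕ} (hH : 1 ≤ H) {b r s : ℤ} :
    HeightLe (normalQuartic b r s) H ↔ (b, r) ∈ admissiblePairs H ∧ |s| ≤ H := by
  rw [mem_admissiblePairs]
  constructor
  · intro h
    have h0 := h 0; have h1 := h 1; have h2 := h 2; have h3 := h 3
    simp only [coeff_normalQuartic, Nat.reduceEqDiff, reduceIte] at h0 h1 h2 h3
    exact ⟨⟨h3, h2, h1⟩, h0⟩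
  · rintro ⟨⟨h3, h2, h1⟩, h0⟩ n
    rw [coeff_normalQuartic]
    split_ifs <;> simp_all

theorem ddMonic_four_eq {H : ℕ} (hH : 1 ≤ H) :
    DdMonic 4 H = (2 * H + 1) * #(admissiblePairs H) := by
  have hset : {f : ℤ[X] | f.Monic ∧ f.natDegree = 4 ∧ HeightLe f H ∧ Decomposable f} =
      (admissiblePairs H ×ˢ Icc (-H : ℤ) H).image fun x => normalQuartic x.1.1 x.1.2 x.2 := by
    ext f
    simp only [Set.mem_ofPred_eq, coe_image, Set.mem_image, mem_coe, mem_product, mem_Icc,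
      ← abs_le, Prod.exists]
    constructor
    · rintro ⟨hm, hd, hht, hdec⟩
      obtain ⟨b, r, s, rfl⟩ := exists_eq_normalQuartic hm hd hdec
      exact ⟨b, r, s, (heightLe_normalQuartic_iff hH).1 hht, rfl⟩
    · rintro ⟨b, r, s, hbrs, rfl⟩
      exact ⟨monic_normalQuartic b r s, natDegree_normalQuartic b r s,
        (heightLe_normalQuartic_iff hH).2 hbrs, decomposable_normalQuartic b r s⟩
  rw [DdMonic, ← Set.coe_ofPred, Nat.card_coe_set_eq, hset, Set.ncard_coe_finset,
    card_image_of_injective _ normalQuartic_injective, card_product, Int.card_Icc, mul_comm]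
  congr 1
  omega

-- `hyperbolaPoints` has positive coordinates; the shift to `(|b| + 1, |r| + 1)` takes in the pairs
-- on the axes, at the price of `(|b| + 1) * (|r| + 1) ≤ 3H + 1` instead of `|b| * |r| ≤ H`.
theorem card_admissiblePairs_le_four_mul_card_hyperbolaPoints (H : ℕ) :
    #(admissiblePairs H) ≤ 4 * #(hyperbolaPoints (H + 1) (3 * H + 1)) := by
  refine (card_le_four_mul_card_image_natAbs _).trans (Nat.mul_le_mul_left 4 ?_)
  rw [← card_image_of_injective _ (Prod.map_injective.2 ⟨Nat.succ_injective, Nat.succ_injective⟩),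
    image_image]
  refine card_le_card fun p hp => ?_
  obtain ⟨⟨b, r⟩, hbr, rfl⟩ := mem_image.1 hp
  simp only [admissiblePairs, mem_filter, mem_product, mem_Icc] at hbr
  obtain ⟨⟨⟨hb₁, hb₂⟩, hr₁, hr₂⟩, -, -, hbr₀⟩ := hbr
  have hb : b.natAbs ≤ H := by omega
  have hr : r.natAbs ≤ H := by omega
  have hbr : b.natAbs * r.natAbs ≤ H := by
    rw [← Int.natAbs_mul]; zify; exact hbr₀
  simp only [hyperbolaPoints, mem_filter, mem_product, mem_Icc, Function.comp, Prod.map]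
  exact ⟨⟨⟨by omega, by omega⟩, by omega, by omega⟩, by nlinarith⟩

theorem card_hyperbolaPoints_le_card_admissiblePairs (H : ℕ) :
    #(hyperbolaPoints (Nat.sqrt (H / 2)) (H / 2)) ≤ #(admissiblePairs H) := by
  refine card_le_card_of_injOn (fun p => ((p.1 : ℤ), (p.2 : ℤ))) (fun p hp => ?_) ?_
  · obtain ⟨m, k⟩ := p
    simp only [hyperbolaPoints, coe_filter, mem_product, mem_Icc, Set.mem_ofPred_eq] at hp
    obtain ⟨⟨⟨hm₁, hm⟩, hk₁, hk⟩, hmk⟩ := hp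
    have hmm : m * m ≤ H / 2 := Nat.le_sqrt.1 hm
    have h1 : 2 * m ≤ H := by nlinarith [Nat.div_mul_le_self H 2]
    have h2 : m ^ 2 + k ≤ H := by nlinarith [Nat.div_mul_le_self H 2]
    have h3 : m * k ≤ H := hmk.trans (Nat.div_le_self H 2)
    rw [mem_coe, mem_admissiblePairs]
    exact ⟨by exact_mod_cast h1, by exact_mod_cast h2, by exact_mod_cast h3⟩
  · intro p _ q _ h
    simp only [Prod.mk.injEq, Nat.cast_inj] at h
    exact Prod.ext h.1 h.2

theorem card_admissiblePairs_le_mul_log {H : ℕ} (hH : 2 ≤ H) :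
    (#(admissiblePairs H) : ℝ) ≤ 64 * H * log H := by
  have hH' : (2 : ℝ) ≤ H := by exact_mod_cast hH
  have hlog : 1 / 2 < log H := by
    linarith [log_two_gt_d9, log_le_log (by norm_num) hH']
  have hlog_succ : log (H + 1) ≤ 2 * log H :=
    calc log (H + 1) ≤ log ((H : ℝ) ^ 2) := log_le_log (by positivity) (by nlinarith)
      _ = 2 * log H := by rw [log_pow, Nat.cast_ofNat]
  have hlog_succ_nonneg : 0 ≤ log (H + 1) := log_nonneg (by linarith)
  calc (#(admissiblePairs H) : ℝ)
      ≤ 4 * #(hyperbolaPoints (H + 1) (3 * H + 1)) := by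
        exact_mod_cast card_admissiblePairs_le_four_mul_card_hyperbolaPoints H
    _ ≤ 4 * ((3 * H + 1) * (1 + log (H + 1))) := by
        rw [card_hyperbolaPoints]
        gcongr
        exact_mod_cast sum_div_le_mul_one_add_log (H + 1) (3 * H + 1)
    _ ≤ 4 * ((4 * H) * (4 * log H)) := by gcongr <;> linarith
    _ = 64 * H * log H := by ring

theorem mul_log_le_card_admissiblePairs {H : ℕ} (hH : 2 ≤ H) :
    H * log H / 32 ≤ (#(admissiblePairs H) : ℝ) := by
  set K := H / 2
  set B := Nat.sqrt K
  have hK : (H : ℝ) ≤ 4 * K := by exact_mod_cast (by omega : H ≤ 4 * K)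
  have hB : 1 ≤ B := Nat.sqrt_pos.2 (by omega)
  have hHB : H ≤ (B + 1) ^ 4 := by
    have hKB : K + 1 ≤ (B + 1) ^ 2 := by rw [sq]; exact Nat.lt_succ_sqrt K
    have hB2 : 2 ≤ (B + 1) ^ 2 := by nlinarith
    calc H ≤ 2 * (B + 1) ^ 2 := by omega
      _ ≤ (B + 1) ^ 2 * (B + 1) ^ 2 := Nat.mul_le_mul_right _ hB2
      _ = (B + 1) ^ 4 := by ring
  have hlog : log H ≤ 4 * log (B + 1) :=
    calc log H ≤ log (((B : ℝ) + 1) ^ 4) := log_le_log (by positivity) (by exact_mod_cast hHB)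
      _ = 4 * log (B + 1) := by rw [log_pow, Nat.cast_ofNat]
  have hlogH : 0 ≤ log H := log_nonneg (by exact_mod_cast (by omega : 1 ≤ H))
  calc H * log H / 32 ≤ K * log (B + 1) / 2 := by nlinarith
    _ ≤ ((∑ m ∈ Icc 1 B, K / m : ℕ) : ℝ) := by
        linarith [mul_log_add_one_le_two_mul_sum_div (Nat.sqrt_le_self K)]
    _ = #(hyperbolaPoints B K) := by rw [card_hyperbolaPoints]
    _ ≤ #(admissiblePairs H) := by exact_mod_cast card_hyperbolaPoints_le_card_admissiblePairs H

theorem stmt_4 :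
    ∃ c₁ c₂ : ℝ, 0 < c₁ ∧ 0 < c₂ ∧ ∀ H : ℕ, 2 ≤ H →
      c₁ * (H : ℝ) ^ 2 * Real.log H ≤ (DdMonic 4 H : ℝ) ∧
      (DdMonic 4 H : ℝ) ≤ c₂ * (H : ℝ) ^ 2 * Real.log H := by
  refine ⟨1 / 16, 192, by norm_num, by norm_num, fun H hH => ?_⟩
  have hH' : (2 : ℝ) ≤ H := by exact_mod_cast hH
  have hlog : 0 ≤ log H := log_nonneg (by linarith)
  have hlower := mul_log_le_card_admissiblePairs hH
  have hupper := card_admissiblePairs_le_mul_log hH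
  rw [ddMonic_four_eq (by omega)]
  push_cast
  constructor <;> nlinarith
end

section
/- Let d ≥ 4 be an integer and let m, n be integers with m ≥ 2, n ≥ 2 and d = mn. If m(m+1) ≤ 2(n-1), then there exists a constant c > 0 (depending only on d) such that for all integers H ≥ 2, D*_d(m,n;H) ≤ c·H^{(m+1)/2 + n/m}, where the exponent (m+1)/2 + n/m is a real number. -/
/-!
Normalise a decomposition `f = g ∘ h` so that `h(0) = 0`, and let `v = max_{1 ≤ k ≤ n} |h(k)|`,
attained at `k₀`. By the intermediate value theorem `h([0, n])` contains the interval between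
`0` and `h(k₀) = ±v`, on which `g` is bounded by `sup_{[0, n]} |f| ≪ H`; Lagrange interpolation
at `m + 1` equally spaced points of that interval gives `|g_i| v^i ≪ H`, in particular
`v^m ≪ H` since `g_m ≠ 0`. Hence `f` is determined by a vector `(h(1), …, h(n))` of sup norm
`v` and coefficients `|g_i| ≪ H / v^i`, and the number of such data is
`≪ ∑_{v ≪ H^{1/m}} v^{n-1} H^{m+1} / v^{m(m+1)/2} ≪ H^{m+1} H^{(n - m(m+1)/2)/m}`,
the summand being increasing in `v` because `m(m+1)/2 ≤ n - 1`.
-/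

open Polynomial

/-- `DStar d m n H` is the number of integer polynomials (not necessarily monic) of
degree `d` and height at most `H` that are a composition `g ∘ h` with `deg g = m`,
`deg h = n`. -/
noncomputable def DStar (d m n : ℕ) (H : ℕ) : ℕ :=
  Nat.card {f : ℤ[X] // f.natDegree = d ∧ f ≠ 0 ∧ HeightLe f H ∧
    ∃ g h : ℤ[X], g.natDegree = m ∧ h.natDegree = n ∧ f = g.comp h}

open Finset Fintype

namespace Polynomial

theorem exists_comp_eq_of_eval_zero_eq_zero {R : Type*} [CommRing R] [IsDomain R]
    (g h : R[X]) : ∃ g' h' : R[X], g'.natDegree = g.natDegree ∧ h'.natDegree = h.natDegree ∧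
      h'.eval 0 = 0 ∧ g'.comp h' = g.comp h :=
  ⟨g.comp (X + C (h.eval 0)), h - C (h.eval 0), by simp [natDegree_comp], natDegree_sub_C,
    by simp, by rw [comp_assoc]; simp⟩

theorem eq_of_eval_natCast_eq {R : Type*} [CommRing R] [IsDomain R] [CharZero R]
    {p q : R[X]} {n : ℕ} (hp : p.natDegree ≤ n) (hq : q.natDegree ≤ n)
    (heval : ∀ k ≤ n, p.eval (k : R) = q.eval (k : R)) : p = q :=
  eq_of_natDegree_lt_card_of_eval_eq p q (f := fun k : Fin (n + 1) => ((k : ℕ) : R))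
    (fun _ _ hkl => Fin.ext (Nat.cast_injective hkl))
    (fun k => heval k (Nat.lt_succ_iff.mp k.isLt)) (by rw [Fintype.card_fin]; omega)

theorem abs_eval_le_of_abs_coeff_le {p : ℝ[X]} {d : ℕ} {H R x : ℝ}
    (hp : p.natDegree ≤ d) (hH : ∀ i, |p.coeff i| ≤ H) (hR : 1 ≤ R) (hx : |x| ≤ R) :
    |p.eval x| ≤ (d + 1) * R ^ d * H := by
  rw [eval_eq_sum_range' (Nat.lt_succ_of_le hp)]
  calc |∑ j ∈ range (d + 1), p.coeff j * x ^ j|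
      ≤ ∑ j ∈ range (d + 1), H * R ^ d := by
        refine (abs_sum_le_sum_abs _ _).trans (sum_le_sum fun j hj => ?_)
        rw [abs_mul, abs_pow]
        have hH0 : 0 ≤ H := (abs_nonneg _).trans (hH 0)
        gcongr
        · exact hH j
        · exact (pow_le_pow_left₀ (abs_nonneg x) hx j).trans
            (pow_le_pow_right₀ hR (Nat.lt_succ_iff.mp (mem_range.mp hj)))
    _ = (d + 1) * R ^ d * H := by rw [sum_const, card_range, nsmul_eq_mul]; push_cast; ring

theorem exists_abs_coeff_le_of_abs_eval_natCast_le (N : ℕ) :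
    ∃ C : ℝ, ∀ p : ℝ[X], p.natDegree ≤ N → ∀ W : ℝ, (∀ t ≤ N, |p.eval (t : ℝ)| ≤ W) →
      ∀ i, |p.coeff i| ≤ C * W := by
  set s := range (N + 1)
  set L : ℕ → ℝ[X] := Lagrange.basis s (Nat.cast : ℕ → ℝ)
  refine ⟨∑ t ∈ s, ∑ j ∈ s, |(L t).coeff j|, fun p hp W hW i => ?_⟩
  have hW0 : 0 ≤ W := (abs_nonneg _).trans (hW 0 (Nat.zero_le _))
  by_cases hi : N < i
  · rw [coeff_eq_zero_of_natDegree_lt (hp.trans_lt hi), abs_zero]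
    exact mul_nonneg (sum_nonneg fun _ _ => sum_nonneg fun _ _ => abs_nonneg _) hW0
  have hinterp : p = ∑ t ∈ s, C (p.eval (t : ℝ)) * L t := by
    refine (Lagrange.eq_interpolate Nat.cast_injective.injOn ?_).trans
      (Lagrange.interpolate_apply _ _ _)
    rw [card_range]
    exact (degree_le_natDegree.trans (WithBot.coe_le_coe.mpr hp)).trans_lt
      (WithBot.coe_lt_coe.mpr N.lt_succ_self)
  rw [hinterp, finsetSum_coeff, sum_mul]
  refine (abs_sum_le_sum_abs _ _).trans (sum_le_sum fun t ht => ?_)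
  rw [coeff_C_mul, abs_mul, mul_comm]
  exact mul_le_mul (single_le_sum (f := fun j => |(L t).coeff j|) (fun _ _ => abs_nonneg _)
    (mem_range.mpr (by omega))) (hW t (Nat.lt_succ_iff.mp (mem_range.mp ht))) (abs_nonneg _)
    (sum_nonneg fun _ _ => abs_nonneg _)

theorem exists_abs_coeff_mul_pow_le_of_abs_eval_le_uIcc (N : ℕ) :
    ∃ A : ℝ, ∀ p : ℝ[X], p.natDegree ≤ N → ∀ Y W : ℝ,
      (∀ y ∈ Set.uIcc 0 Y, |p.eval y| ≤ W) → ∀ i ≤ N, |p.coeff i| * |Y| ^ i ≤ A * W := by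
  obtain ⟨K, hK⟩ := exists_abs_coeff_le_of_abs_eval_natCast_le N
  refine ⟨(N + 1) ^ N * K, fun p hp Y W hW i hi => ?_⟩
  have hN : (0 : ℝ) < N + 1 := by positivity
  set δ := Y / (N + 1)
  have hY : |Y| = (N + 1) * |δ| := by
    rw [abs_div, abs_of_pos hN]; field_simp
  have hdeg : (p.comp (C δ * X)).natDegree ≤ N :=
    natDegree_comp_le.trans (by nlinarith [natDegree_C_mul_le δ X, natDegree_X_le (R := ℝ)])
  have hnodes : ∀ t ≤ N, δ * t ∈ Set.uIcc 0 Y := by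
    intro t ht
    have ht' : (t : ℝ) / (N + 1) ≤ 1 := by
      rw [div_le_one hN]; exact_mod_cast ht.trans N.le_succ
    rw [show δ * t = (t / (N + 1)) * Y by ring]
    rcases le_total 0 Y with hY0 | hY0
    · exact Set.mem_uIcc_of_le (by positivity) (by nlinarith)
    · exact Set.mem_uIcc_of_ge (by nlinarith)
        (mul_nonpos_of_nonneg_of_nonpos (by positivity) hY0)
  have hscaled := hK (p.comp (C δ * X)) hdeg W (fun t ht => by
    simpa [eval_comp] using hW _ (hnodes t ht)) i
  rw [comp_C_mul_X_coeff, abs_mul, abs_pow] at hscaled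
  calc |p.coeff i| * |Y| ^ i = (N + 1) ^ i * (|p.coeff i| * |δ| ^ i) := by
        rw [hY, mul_pow]; ring
    _ ≤ (N + 1) ^ N * (K * W) := by
      have hKW : 0 ≤ K * W := (by positivity : (0 : ℝ) ≤ _).trans hscaled
      gcongr
      linarith
    _ = _ := by ring

end Polynomial

theorem exists_abs_coeff_mul_abs_eval_pow_le_of_eq_comp (d m n : ℕ) :
    ∃ a : ℕ, 0 < a ∧ ∀ (H : ℕ) (f g h : ℤ[X]), f.natDegree ≤ d → HeightLe f H →
      g.natDegree ≤ m → h.eval 0 = 0 → f = g.comp h →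
      ∀ k ≤ n, ∀ i ≤ m, |g.coeff i| * |h.eval (k : ℤ)| ^ i ≤ a * H := by
  obtain ⟨A, hA⟩ := exists_abs_coeff_mul_pow_le_of_abs_eval_le_uIcc m
  set a := ⌈A * ((d + 1) * (n + 1) ^ d)⌉₊ + 1
  refine ⟨a, Nat.succ_pos _, fun H f g h hf hfH hg h0 hfgh k hk i hi => ?_⟩
  set φ := Int.castRingHom ℝ
  have hcomp : ∀ y ∈ Set.uIcc 0 ((h.eval (k : ℤ) : ℤ) : ℝ),
      |(g.map φ).eval y| ≤ (d + 1) * (n + 1) ^ d * H := by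
    intro y hy
    have hIVT := intermediate_value_uIcc (a := 0) (b := (k : ℝ))
      (h.map φ).continuous.continuousOn
    obtain ⟨x, hx, rfl⟩ := hIVT (by simpa [φ, h0] using hy)
    rw [← eval_comp, ← Polynomial.map_comp, ← hfgh]
    rw [Set.uIcc_of_le k.cast_nonneg] at hx
    refine abs_eval_le_of_abs_coeff_le (natDegree_map_le.trans hf)
      (fun j => by simpa [φ, ← Int.cast_abs] using (Int.cast_le (R := ℝ)).mpr (hfH j))
      (by linarith [n.cast_nonneg (α := ℝ)]) ?_
    rw [abs_of_nonneg hx.1]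
    linarith [(Nat.cast_le (α := ℝ)).mpr hk, hx.2]
  have hcoeff := hA (g.map φ) (natDegree_map_le.trans hg) _ _ hcomp i hi
  have ha : A * ((d + 1) * (n + 1) ^ d) ≤ a := by
    have := Nat.le_ceil (A * ((d + 1) * (n + 1) ^ d))
    push_cast [a]; linarith
  have : ((|g.coeff i| * |h.eval (k : ℤ)| ^ i : ℤ) : ℝ) ≤ ((a * H : ℕ) : ℝ) := by
    push_cast
    calc |((g.coeff i : ℤ) : ℝ)| * |((h.eval (k : ℤ) : ℤ) : ℝ)| ^ i
        ≤ A * ((d + 1) * (n + 1) ^ d * H) := by simpa [φ] using hcoeff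
      _ ≤ a * H := by rw [← mul_assoc]; gcongr
  exact_mod_cast this

noncomputable def supNormSphere (n v : ℕ) : Finset (Fin n → ℤ) :=
  piFinset (fun _ => Icc (-(v : ℤ)) v) \ piFinset (fun _ => Icc (-((v : ℤ) - 1)) ((v : ℤ) - 1))

noncomputable def weightedBox (m B v : ℕ) : Finset (Fin (m + 1) → ℤ) :=
  piFinset fun i => Icc (-((B / v ^ (i : ℕ) : ℕ) : ℤ)) (B / v ^ (i : ℕ) : ℕ)

noncomputable def compositionCodes (n m B : ℕ) : Finset ((Fin n → ℤ) × (Fin (m + 1) → ℤ)) :=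
  {v ∈ Icc 1 B | v ^ m ≤ B}.biUnion fun v => supNormSphere n v ×ˢ weightedBox m B v

theorem mem_supNormSphere {n v : ℕ} {w : Fin n → ℤ} :
    w ∈ supNormSphere n v ↔ (∀ k, (w k).natAbs ≤ v) ∧ ∃ k, (w k).natAbs = v := by
  simp only [supNormSphere, mem_sdiff, mem_piFinset, mem_Icc, not_forall]
  constructor
  · rintro ⟨hle, k, hk⟩
    exact ⟨fun j => by have := hle j; omega, k, by have := hle k; omega⟩
  · rintro ⟨hle, k, hk⟩
    exact ⟨fun j => by have := hle j; omega, k, by omega⟩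

theorem card_supNormSphere_le (n : ℕ) {v : ℕ} (hv : 1 ≤ v) :
    ((supNormSphere n v).card : ℝ) ≤ 2 * n * (3 * v) ^ (n - 1) := by
  have hsub : piFinset (fun _ : Fin n => Icc (-((v : ℤ) - 1)) ((v : ℤ) - 1)) ⊆
      piFinset fun _ => Icc (-(v : ℤ)) v :=
    piFinset_subset _ _ fun _ => Icc_subset_Icc (by omega) (by omega)
  have hbig : (piFinset fun _ : Fin n => Icc (-(v : ℤ)) v).card = (2 * v + 1) ^ n := by
    rw [card_piFinset, prod_const, card_univ, Fintype.card_fin, Int.card_Icc]; congr 1; omega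
  have hsmall : (piFinset fun _ : Fin n => Icc (-((v : ℤ) - 1)) ((v : ℤ) - 1)).card =
      (2 * (v - 1) + 1) ^ n := by
    rw [card_piFinset, prod_const, card_univ, Fintype.card_fin, Int.card_Icc]; congr 1; omega
  rw [supNormSphere, card_sdiff_of_subset hsub, Nat.cast_sub (card_le_card hsub), hbig, hsmall]
  push_cast [Nat.cast_sub hv]
  have hv' : (1 : ℝ) ≤ v := by exact_mod_cast hv
  calc ((2 * v + 1 : ℝ)) ^ n - (2 * (v - 1) + 1) ^ n
      ≤ |(2 * v + 1 : ℝ) - (2 * (v - 1) + 1)| * n *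
          max |(2 * v + 1 : ℝ)| |2 * (v - 1) + 1| ^ (n - 1) :=
        (le_abs_self _).trans (abs_pow_sub_pow_le _ _ _)
    _ = 2 * n * (2 * v + 1) ^ (n - 1) := by
        rw [abs_of_nonneg (by linarith), abs_of_nonneg (by linarith),
          abs_of_nonneg (by linarith), max_eq_left (by linarith)]
        ring
    _ ≤ 2 * n * (3 * v) ^ (n - 1) := by gcongr; linarith

theorem card_weightedBox_mul_le (m : ℕ) {B v : ℕ} (hv : 1 ≤ v) (hvB : v ^ m ≤ B) :
    (weightedBox m B v).card * v ^ (∑ i ∈ range (m + 1), i) ≤ (3 * B) ^ (m + 1) := by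
  calc (weightedBox m B v).card * v ^ (∑ i ∈ range (m + 1), i)
      = ∏ i : Fin (m + 1), (2 * (B / v ^ (i : ℕ)) + 1) * v ^ (i : ℕ) := by
        rw [weightedBox, card_piFinset, ← Fin.sum_univ_eq_sum_range (fun i => i),
          ← prod_pow_eq_pow_sum, ← prod_mul_distrib]
        refine prod_congr rfl fun i _ => ?_
        rw [Int.card_Icc]; congr 1; omega
    _ ≤ ∏ _i : Fin (m + 1), 3 * B := by
        refine prod_le_prod' fun i _ => ?_
        have hvi : v ^ (i : ℕ) ≤ B :=
          (Nat.pow_le_pow_right hv (Nat.lt_succ_iff.mp i.isLt)).trans hvB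
        have hdiv := Nat.div_mul_le_self B (v ^ (i : ℕ))
        nlinarith
    _ = (3 * B) ^ (m + 1) := by rw [prod_const, card_univ, Fintype.card_fin]

theorem card_supNormSphere_product_weightedBox_le {m n B v : ℕ} (hv : 1 ≤ v)
    (hvB : v ^ m ≤ B) (hmn : ∑ i ∈ range (m + 1), i ≤ n - 1) :
    ((supNormSphere n v ×ˢ weightedBox m B v).card : ℝ) ≤
      2 * n * 3 ^ (n - 1) * 3 ^ (m + 1) * (B : ℝ) ^ (m + 1) *
        (v : ℝ) ^ (n - 1 - ∑ i ∈ range (m + 1), i) := by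
  set M := ∑ i ∈ range (m + 1), i
  have hbox : ((weightedBox m B v).card : ℝ) * (v : ℝ) ^ M ≤ (3 * B) ^ (m + 1) := by
    exact_mod_cast card_weightedBox_mul_le m hv hvB
  rw [card_product, Nat.cast_mul]
  calc ((supNormSphere n v).card : ℝ) * (weightedBox m B v).card
      ≤ 2 * n * (3 * v) ^ (n - 1) * (weightedBox m B v).card := by
        gcongr; exact card_supNormSphere_le n hv
    _ = 2 * n * 3 ^ (n - 1) * (v : ℝ) ^ (n - 1 - M) * ((weightedBox m B v).card * v ^ M) := by
        rw [mul_pow, ← Nat.sub_add_cancel hmn, pow_add, Nat.add_sub_cancel]; ring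
    _ ≤ 2 * n * 3 ^ (n - 1) * (v : ℝ) ^ (n - 1 - M) * (3 * B) ^ (m + 1) := by gcongr
    _ = _ := by rw [mul_pow]; ring

theorem sum_filter_pow_le_rpow {m : ℕ} (hm : 0 < m) (B e : ℕ) :
    ∑ v ∈ {v ∈ Icc 1 B | v ^ m ≤ B}, (v : ℝ) ^ e ≤ (B : ℝ) ^ (((e + 1 : ℕ) : ℝ) / m) := by
  set S := {v ∈ Icc 1 B | v ^ m ≤ B}
  set X := (B : ℝ) ^ (m : ℝ)⁻¹
  have hX : 0 ≤ X := by positivity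
  have hvX : ∀ v ∈ S, (v : ℝ) ≤ X := fun v hv =>
    (Real.le_rpow_inv_iff_of_pos v.cast_nonneg B.cast_nonneg (by positivity)).mpr
      (by rw [Real.rpow_natCast]; exact_mod_cast (mem_filter.mp hv).2)
  have hcard : (S.card : ℝ) ≤ X := by
    have hsub : S ⊆ Icc 1 ⌊X⌋₊ := fun v hv =>
      mem_Icc.mpr ⟨(mem_Icc.mp (mem_filter.mp hv).1).1, Nat.le_floor (hvX v hv)⟩
    calc (S.card : ℝ) ≤ (Icc 1 ⌊X⌋₊).card := by exact_mod_cast card_le_card hsub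
      _ ≤ X := by rw [Nat.card_Icc, Nat.add_sub_cancel]; exact Nat.floor_le hX
  calc ∑ v ∈ S, (v : ℝ) ^ e ≤ ∑ _v ∈ S, X ^ e :=
        sum_le_sum fun v hv => pow_le_pow_left₀ v.cast_nonneg (hvX v hv) e
    _ = S.card * X ^ e := by rw [sum_const, nsmul_eq_mul]
    _ ≤ X ^ (e + 1) := by rw [pow_succ']; gcongr
    _ = (B : ℝ) ^ (((e + 1 : ℕ) : ℝ) / m) := by
        rw [← Real.rpow_natCast, ← Real.rpow_mul B.cast_nonneg, inv_mul_eq_div]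

theorem card_compositionCodes_le {m n : ℕ} (hm : 0 < m) (hmn : m * (m + 1) ≤ 2 * (n - 1))
    (B : ℕ) : ((compositionCodes n m B).card : ℝ) ≤
      2 * n * 3 ^ (n - 1) * 3 ^ (m + 1) * (B : ℝ) ^ (((m : ℝ) + 1) / 2 + (n : ℝ) / m) := by
  set M := ∑ i ∈ range (m + 1), i
  have hM : M * 2 = m * (m + 1) := by rw [sum_range_id_mul_two, Nat.add_sub_cancel, mul_comm]
  have hMn : M ≤ n - 1 := by linarith
  have hM0 : 0 < M := by nlinarith
  set K : ℝ := 2 * n * 3 ^ (n - 1) * 3 ^ (m + 1)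
  have hexp : ((m + 1 : ℕ) : ℝ) + ((n - 1 - M + 1 : ℕ) : ℝ) / m =
      ((m : ℝ) + 1) / 2 + (n : ℝ) / m := by
    have hMR : (M : ℝ) * 2 = m * (m + 1) := by exact_mod_cast hM
    rw [show n - 1 - M + 1 = n - M by omega, Nat.cast_sub (by omega)]
    field_simp
    push_cast
    linarith
  calc ((compositionCodes n m B).card : ℝ)
      ≤ ∑ v ∈ {v ∈ Icc 1 B | v ^ m ≤ B},
          ((supNormSphere n v ×ˢ weightedBox m B v).card : ℝ) := by
        exact_mod_cast card_biUnion_le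
    _ ≤ ∑ v ∈ {v ∈ Icc 1 B | v ^ m ≤ B}, K * (B : ℝ) ^ (m + 1) * (v : ℝ) ^ (n - 1 - M) :=
        sum_le_sum fun v hv => card_supNormSphere_product_weightedBox_le
          (mem_Icc.mp (mem_filter.mp hv).1).1 (mem_filter.mp hv).2 hMn
    _ = K * (B : ℝ) ^ (m + 1) * ∑ v ∈ {v ∈ Icc 1 B | v ^ m ≤ B}, (v : ℝ) ^ (n - 1 - M) := by
        rw [mul_sum]
    _ ≤ K * (B : ℝ) ^ (m + 1) * (B : ℝ) ^ (((n - 1 - M + 1 : ℕ) : ℝ) / m) := by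
        gcongr; exact sum_filter_pow_le_rpow hm B _
    _ = K * (B : ℝ) ^ (((m : ℝ) + 1) / 2 + (n : ℝ) / m) := by
        rw [← hexp, Real.rpow_add' B.cast_nonneg (by rw [hexp]; positivity), Real.rpow_natCast]
        ring

def compCode (n m : ℕ) (g h : ℤ[X]) : (Fin n → ℤ) × (Fin (m + 1) → ℤ) :=
  (fun k => h.eval ((k : ℤ) + 1), fun i => g.coeff i)

theorem compCode_injective {m n : ℕ} {g g' h h' : ℤ[X]} (hg : g.natDegree ≤ m)
    (hg' : g'.natDegree ≤ m) (hh : h.natDegree ≤ n) (hh' : h'.natDegree ≤ n)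
    (h0 : h.eval 0 = 0) (h0' : h'.eval 0 = 0) (hcode : compCode n m g h = compCode n m g' h') :
    g = g' ∧ h = h' := by
  obtain ⟨hvalues, hcoeffs⟩ := Prod.mk.inj hcode
  refine ⟨ext fun i => ?_, eq_of_eval_natCast_eq hh hh' fun k hk => ?_⟩
  · rcases le_or_gt i m with hi | hi
    · exact congrFun hcoeffs ⟨i, Nat.lt_succ_of_le hi⟩
    · rw [coeff_eq_zero_of_natDegree_lt (hg.trans_lt hi),
        coeff_eq_zero_of_natDegree_lt (hg'.trans_lt hi)]
  · rcases k with _ | k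
    · simp [h0, h0']
    · simpa using congrFun hvalues ⟨k, hk⟩

theorem compCode_mem_compositionCodes {m n B : ℕ} (hm : 0 < m) (hn : 0 < n) {g h : ℤ[X]}
    (hg : g.natDegree = m) (hh : h.natDegree = n) (h0 : h.eval 0 = 0)
    (hbound : ∀ k ≤ n, ∀ i ≤ m, |g.coeff i| * |h.eval (k : ℤ)| ^ i ≤ B) :
    compCode n m g h ∈ compositionCodes n m B := by
  set w := (compCode n m g h).1
  set v := univ.sup fun k => (w k).natAbs
  have hw : ∀ k, (w k).natAbs ≤ v := fun k => le_sup (f := fun k => (w k).natAbs) (mem_univ k)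
  obtain ⟨k₀, -, hk₀⟩ := exists_mem_eq_sup univ (univ_nonempty_iff.mpr ⟨⟨0, hn⟩⟩)
    fun k => (w k).natAbs
  have hgv : ∀ i ≤ m, |g.coeff i| * (v : ℤ) ^ i ≤ B := by
    intro i hi
    have hv : (v : ℤ) = |h.eval (((k₀ : ℕ) + 1 : ℕ) : ℤ)| := by
      simp only [v, hk₀, w, compCode, Int.abs_eq_natAbs]; push_cast; rfl
    rw [hv]
    exact hbound (k₀ + 1) (by omega) i hi
  have hv : 1 ≤ v := by
    by_contra! hv0
    have hzero : h = 0 := eq_of_eval_natCast_eq hh.le (natDegree_zero.trans_le n.zero_le)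
      fun k hk => by
        rcases k with _ | k
        · simpa using h0
        · have := hw ⟨k, hk⟩
          simp only [w, compCode] at this
          push_cast
          rw [eval_zero]
          omega
    rw [hzero, natDegree_zero] at hh
    omega
  have hvm : v ^ m ≤ B := by
    have hlead : g.coeff m ≠ 0 := by
      rw [← hg]
      exact leadingCoeff_ne_zero.mpr (by rintro rfl; simp at hg; omega)
    have : (v : ℤ) ^ m ≤ B :=
      (le_mul_of_one_le_left (by positivity) (Int.one_le_abs hlead)).trans (hgv m le_rfl)
    exact_mod_cast this
  refine mem_biUnion.mpr ⟨v, mem_filter.mpr ⟨mem_Icc.mpr ⟨hv, (Nat.le_self_pow hm.ne' v).trans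
    hvm⟩, hvm⟩, mem_product.mpr ⟨mem_supNormSphere.mpr ⟨hw, k₀, hk₀.symm⟩,
    mem_piFinset.mpr fun i => ?_⟩⟩
  have hpos : (0 : ℤ) < (v : ℤ) ^ (i : ℕ) := by positivity
  have : |g.coeff i| ≤ ((B / v ^ (i : ℕ) : ℕ) : ℤ) := by
    rw [Int.natCast_div, Nat.cast_pow, Int.le_ediv_iff_mul_le hpos]
    exact hgv i (Nat.lt_succ_iff.mp i.isLt)
  exact mem_Icc.mpr (abs_le.mp this)

theorem dStar_le_card_compositionCodes {d m n H B : ℕ} (hm : 0 < m) (hn : 0 < n)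
    (hbound : ∀ f g h : ℤ[X], f.natDegree = d → HeightLe f H → g.natDegree = m →
      h.eval 0 = 0 → f = g.comp h → ∀ k ≤ n, ∀ i ≤ m, |g.coeff i| * |h.eval (k : ℤ)| ^ i ≤ B) :
    DStar d m n H ≤ (compositionCodes n m B).card := by
  set T := {f : ℤ[X] // f.natDegree = d ∧ f ≠ 0 ∧ HeightLe f H ∧
    ∃ g h : ℤ[X], g.natDegree = m ∧ h.natDegree = n ∧ f = g.comp h}
  have hnormal : ∀ f : T, ∃ gh : ℤ[X] × ℤ[X], gh.1.natDegree = m ∧ gh.2.natDegree = n ∧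
      gh.2.eval 0 = 0 ∧ f.1 = gh.1.comp gh.2 := by
    rintro ⟨f, -, -, -, g, h, rfl, rfl, rfl⟩
    obtain ⟨g', h', hg', hh', h0', hcomp⟩ := exists_comp_eq_of_eval_zero_eq_zero g h
    exact ⟨(g', h'), hg', hh', h0', hcomp.symm⟩
  choose D hDg hDh hD0 hDf using hnormal
  have hmem : ∀ f : T, compCode n m (D f).1 (D f).2 ∈ compositionCodes n m B := fun f =>
    compCode_mem_compositionCodes hm hn (hDg f) (hDh f) (hD0 f)
      (hbound f.1 _ _ f.2.1 f.2.2.2.1 (hDg f) (hD0 f) (hDf f))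
  refine (Nat.card_le_card_of_injective (fun f => (⟨_, hmem f⟩ : compositionCodes n m B))
    fun f f' hff' => Subtype.ext ?_).trans (Nat.card_eq_finsetCard _).le
  obtain ⟨hg, hh⟩ := compCode_injective (hDg f).le (hDg f').le (hDh f).le (hDh f').le
    (hD0 f) (hD0 f') (congrArg Subtype.val hff')
  rw [hDf f, hDf f', hg, hh]

theorem stmt_10_general (d m n : ℕ) (hm : 2 ≤ m) (hn : 2 ≤ n)
    (hcond : m * (m + 1) ≤ 2 * (n - 1)) :
    ∃ c : ℝ, 0 < c ∧ ∀ H : ℕ, 2 ≤ H →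
      (DStar d m n H : ℝ) ≤ c * (H : ℝ) ^ (((m : ℝ) + 1) / 2 + (n : ℝ) / m) := by
  obtain ⟨a, ha, hbound⟩ := exists_abs_coeff_mul_abs_eval_pow_le_of_eq_comp d m n
  refine ⟨2 * n * 3 ^ (n - 1) * 3 ^ (m + 1) * (a : ℝ) ^ (((m : ℝ) + 1) / 2 + (n : ℝ) / m),
    by positivity, fun H _ => ?_⟩
  have hcodes : DStar d m n H ≤ (compositionCodes n m (a * H)).card :=
    dStar_le_card_compositionCodes (by omega) (by omega)
      fun f g h hf hfH hg h0 hfgh k hk i hi => by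
        push_cast
        exact hbound H f g h hf.le hfH hg.le h0 hfgh k hk i hi
  calc (DStar d m n H : ℝ) ≤ (compositionCodes n m (a * H)).card := by exact_mod_cast hcodes
    _ ≤ _ := card_compositionCodes_le (by omega) hcond _
    _ = _ := by rw [Nat.cast_mul, Real.mul_rpow a.cast_nonneg H.cast_nonneg]; ring

theorem stmt_10 (d m n : ℕ) (hd : 4 ≤ d) (hm : 2 ≤ m) (hn : 2 ≤ n) (hmn : d = m * n)
    (hcond : m * (m + 1) ≤ 2 * (n - 1)) :
    ∃ c : ℝ, 0 < c ∧ ∀ H : ℕ, 2 ≤ H →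
      (DStar d m n H : ℝ) ≤ c * (H : ℝ) ^ (((m : ℝ) + 1) / 2 + (n : ℝ) / m) :=
  stmt_10_general d m n hm hn hcond
end

section
/- Let d ≥ 4 be a composite integer with d ≠ 6, and let ℓ be the smallest prime factor of d. Then there exists a constant c > 0 (depending only on d) such that for all integers H ≥ 2, |D*_d(H) - I*_d(H)| ≤ c·H^{d/ℓ}. -/
/-!
A decomposable `f` of degree `d` that is not `g ∘ h` with `g`, `h` indecomposable and
`deg h = ℓ` can be written as `G ∘ K` with `M = deg K` a divisor of `d` and `ℓ < M < d`:
if the inner factor has degree `ℓ`, the outer one is decomposable and can be regrouped.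
For fixed `M` and `k = d / M` we may translate so that `K(0) = 0`. If `B` is the height of
`K`, compactness of the unit spheres gives `|Gᵢ| Bⁱ = O(H)` for all `i`, in particular
`Bᵏ = O(H)`. Counting coefficient vectors over all `B` bounds the number of such
compositions by `O(H ^ (k + 2 + ⌊(M - k(k+1)/2) / k⌋))`, and this exponent is at most
`d / ℓ` unless `d = 6`.
-/

open Polynomial

/-- `DdStar d H` is the number of decomposable integer polynomials (not necessarily monic)
of degree `d` and height at most `H`. -/
noncomputable def DdStar (d : ℕ) (H : ℕ) : ℕ :=
  Nat.card {f : ℤ[X] // f.natDegree = d ∧ f ≠ 0 ∧ HeightLe f H ∧ Decomposable f}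

/-- `IdStar d e H` is the number of integer polynomials of degree `d` and height at
most `H` which are compositions `g ∘ h` of indecomposable polynomials with
`deg g = d / e` and `deg h = e`. -/
noncomputable def IdStar (d e : ℕ) (H : ℕ) : ℕ :=
  Nat.card {f : ℤ[X] // f.natDegree = d ∧ f ≠ 0 ∧ HeightLe f H ∧
    ∃ g h : ℤ[X], ¬ Decomposable g ∧ ¬ Decomposable h ∧
      g.natDegree = d / e ∧ h.natDegree = e ∧ f = g.comp h}

open Finset Metric

section ContinuousCoeff

variable {α R : Type*} [TopologicalSpace α] [Semiring R] [TopologicalSpace R]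

lemma continuous_coeff_ofFn [DecidableEq R] (n i : ℕ) :
    Continuous fun v : Fin n → R => (ofFn n v).coeff i := by
  by_cases hi : i < n
  · simpa only [ofFn_coeff_eq_val_of_lt _ hi] using continuous_apply _
  · simpa only [ofFn_coeff_eq_zero_of_ge _ (not_lt.1 hi)] using continuous_const

variable [IsTopologicalSemiring R] {p q : α → R[X]}

lemma continuous_coeff_pow (hp : ∀ n, Continuous fun a => (p a).coeff n) (i n : ℕ) :
    Continuous fun a => (p a ^ i).coeff n := by
  induction i generalizing n with
  | zero => simpa only [pow_zero, coeff_one] using continuous_const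
  | succ i ih =>
    simp only [pow_succ, coeff_mul]
    exact continuous_finsetSum _ fun x _ => (ih x.1).mul (hp x.2)

lemma continuous_coeff_comp {N : ℕ} (hN : ∀ a, (p a).natDegree < N)
    (hp : ∀ n, Continuous fun a => (p a).coeff n) (hq : ∀ n, Continuous fun a => (q a).coeff n)
    (n : ℕ) : Continuous fun a => ((p a).comp (q a)).coeff n := by
  simp only [comp, eval₂_eq_sum_range' C (hN _), finsetSum_coeff, coeff_C_mul]
  exact continuous_finsetSum _ fun i _ => (hp i).mul (continuous_coeff_pow hq i n)

end ContinuousCoeff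

lemma map_ofFn {R S : Type*} [Semiring R] [Semiring S] [DecidableEq R] [DecidableEq S]
    (f : R →+* S) (n : ℕ) (v : Fin n → R) : (ofFn n v).map f = ofFn n (f ∘ v) := by
  ext i
  by_cases hi : i < n
  · simp [hi]
  · simp [not_lt.1 hi]

/-- The coefficients of `G ∘ K` for `G = ∑ cᵢ Xⁱ` and `K = X * ∑ uⱼ Xʲ` (so `K(0) = 0`); the
index range reaches the degree of the composition. -/
noncomputable def compCoeffs (k M : ℕ) (p : (Fin (k + 1) → ℝ) × (Fin M → ℝ)) :
    Fin (k * M + 1) → ℝ :=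
  fun n => ((ofFn (k + 1) p.1).comp (ofFn M p.2 * X)).coeff n

lemma continuous_compCoeffs (k M : ℕ) : Continuous (compCoeffs k M) := by
  refine continuous_pi fun n => continuous_coeff_comp (N := k + 1)
    (fun _ => ofFn_natDegree_lt (Nat.succ_pos k) _)
    (fun i => (continuous_coeff_ofFn _ i).comp continuous_fst) (fun i => ?_) n
  rcases i with _ | i
  · simpa only [coeff_mul_X_zero] using continuous_const
  · simp only [coeff_mul_X]
    exact (continuous_coeff_ofFn M i).comp continuous_snd

lemma compCoeffs_ne_zero {k M : ℕ} {c : Fin (k + 1) → ℝ} {u : Fin M → ℝ} (hc : c ≠ 0)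
    (hu : u ≠ 0) : compCoeffs k M (c, u) ≠ 0 := by
  set G := ofFn (k + 1) c
  set K := ofFn M u * X
  have hG : G ≠ 0 := (map_ne_zero_iff _ (injective_ofFn _)).2 hc
  have hu' : ofFn M u ≠ 0 := (map_ne_zero_iff _ (injective_ofFn _)).2 hu
  have hK : K.natDegree = (ofFn M u).natDegree + 1 := natDegree_mul_X hu'
  have hGK : G.comp K ≠ 0 := by
    rw [Ne, comp_eq_zero_iff, not_or, not_and_or]
    refine ⟨hG, Or.inr fun h => ?_⟩
    have := congrArg natDegree h
    rw [natDegree_C, hK] at this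
    omega
  have hdeg : (G.comp K).natDegree < k * M + 1 := by
    rw [natDegree_comp, hK, Nat.lt_succ_iff]
    exact Nat.mul_le_mul (Nat.lt_succ_iff.1 (ofFn_natDegree_lt (Nat.succ_pos k) c))
      (ofFn_natDegree_lt (Nat.pos_of_ne_zero (ne_zero_of_ofFn_ne_zero hu')) u)
  intro h
  exact hGK (leadingCoeff_eq_zero.1 (congrFun h ⟨_, hdeg⟩))

lemma compCoeffs_smul_left (k M : ℕ) (a : ℝ) (c : Fin (k + 1) → ℝ) (u : Fin M → ℝ) :
    compCoeffs k M (a • c, u) = a • compCoeffs k M (c, u) := by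
  ext n
  simp [compCoeffs, smul_comp]

lemma compCoeffs_rescale (k M : ℕ) {s : ℝ} (hs : s ≠ 0) (c : Fin (k + 1) → ℝ)
    (u : Fin M → ℝ) :
    compCoeffs k M (fun i => c i * s ^ (i : ℕ), s⁻¹ • u) = compCoeffs k M (c, u) := by
  have hc : ofFn (k + 1) (fun i => c i * s ^ (i : ℕ)) = (ofFn (k + 1) c).comp (C s * X) := by
    ext i
    by_cases hi : i < k + 1
    · simp [hi]
    · simp [not_lt.1 hi]
  have hu : ofFn M (s⁻¹ • u) * X = C s⁻¹ * (ofFn M u * X) := by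
    rw [map_smul, smul_eq_C_mul, mul_assoc]
  ext n
  simp only [compCoeffs, hc, hu, comp_assoc, mul_comp, C_comp, X_comp, ← mul_assoc, ← C_mul,
    mul_inv_cancel₀ hs, C_1, one_mul]

lemma exists_pos_mul_norm_le_norm_compCoeffs (k : ℕ) {M : ℕ} (hM : 0 < M) :
    ∃ γ > 0, ∀ c u, ‖u‖ = 1 → γ * ‖c‖ ≤ ‖compCoeffs k M (c, u)‖ := by
  have : Nonempty (Fin M) := ⟨⟨0, hM⟩⟩
  set S := sphere (0 : Fin (k + 1) → ℝ) 1 ×ˢ sphere (0 : Fin M → ℝ) 1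
  obtain ⟨p, ⟨hp₁, hp₂⟩, hmin⟩ :=
    ((isCompact_sphere _ _).prod (isCompact_sphere _ _)).exists_isMinOn
      ((NormedSpace.sphere_nonempty.2 zero_le_one).prod (NormedSpace.sphere_nonempty.2 zero_le_one))
      (continuous_compCoeffs k M).norm.continuousOn
  rw [mem_sphere_zero_iff_norm] at hp₁ hp₂
  have hp : compCoeffs k M p ≠ 0 := compCoeffs_ne_zero
    (norm_ne_zero_iff.1 (hp₁ ▸ one_ne_zero)) (norm_ne_zero_iff.1 (hp₂ ▸ one_ne_zero))
  refine ⟨_, norm_pos_iff.2 hp, fun c u hu => ?_⟩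
  rcases eq_or_ne c 0 with rfl | hc
  · simp
  have hc' : 0 < ‖c‖ := norm_pos_iff.2 hc
  have hmem : (‖c‖⁻¹ • c, u) ∈ S := by simp [S, norm_smul, hc'.ne', hu]
  have h : ‖compCoeffs k M p‖ ≤ ‖compCoeffs k M (‖c‖⁻¹ • c, u)‖ := hmin hmem
  rw [compCoeffs_smul_left, norm_smul, norm_inv, norm_norm, le_inv_mul_iff₀ hc'] at h
  rwa [mul_comm]

lemma exists_pos_mul_abs_mul_norm_pow_le (k : ℕ) {M : ℕ} (hM : 0 < M) :
    ∃ γ > 0, ∀ c u, u ≠ 0 → ∀ i : Fin (k + 1),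
      γ * (|c i| * ‖u‖ ^ (i : ℕ)) ≤ ‖compCoeffs k M (c, u)‖ := by
  obtain ⟨γ, hγ, h⟩ := exists_pos_mul_norm_le_norm_compCoeffs k hM
  refine ⟨γ, hγ, fun c u hu i => ?_⟩
  have hu' : ‖u‖ ≠ 0 := norm_ne_zero_iff.2 hu
  calc γ * (|c i| * ‖u‖ ^ (i : ℕ))
      ≤ γ * ‖fun i => c i * ‖u‖ ^ (i : ℕ)‖ := by
        gcongr
        simpa [abs_mul] using norm_le_pi_norm (fun i => c i * ‖u‖ ^ (i : ℕ)) i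
    _ ≤ ‖compCoeffs k M (fun i => c i * ‖u‖ ^ (i : ℕ), ‖u‖⁻¹ • u)‖ :=
        h _ _ (by simp [norm_smul, hu'])
    _ = ‖compCoeffs k M (c, u)‖ := by rw [compCoeffs_rescale k M hu']

lemma exists_natAbs_mul_pow_le (k : ℕ) {M : ℕ} (hM : 0 < M) :
    ∃ C : ℕ, ∀ (c : Fin (k + 1) → ℤ) (u : Fin M → ℤ) (H : ℕ), u ≠ 0 →
      HeightLe ((ofFn (k + 1) c).comp (ofFn M u * X)) H →
      ∃ B : ℕ, 1 ≤ B ∧ (∀ j, (u j).natAbs ≤ B) ∧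
        ∀ i, (c i).natAbs * B ^ (i : ℕ) ≤ C * H := by
  obtain ⟨γ, hγ, hbound⟩ := exists_pos_mul_abs_mul_norm_pow_le k hM
  refine ⟨⌈γ⁻¹⌉₊, fun c u H hu hH => ?_⟩
  set ι := Int.castRingHom ℝ
  have hcomp (n : Fin (k * M + 1)) : compCoeffs k M (ι ∘ c, ι ∘ u) n =
      ι (((ofFn (k + 1) c).comp (ofFn M u * X)).coeff n) := by
    rw [← coeff_map, map_comp, Polynomial.map_mul, map_X, map_ofFn, map_ofFn]
    rfl
  have hnorm : ‖compCoeffs k M (ι ∘ c, ι ∘ u)‖ ≤ H := by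
    refine (pi_norm_le_iff_of_nonneg (Nat.cast_nonneg H)).2 fun n => ?_
    rw [hcomp, Real.norm_eq_abs, eq_intCast, ← Int.cast_abs]
    exact_mod_cast hH n
  have hu₁ : 1 ≤ ‖ι ∘ u‖ := by
    obtain ⟨j, hj⟩ := Function.ne_iff.1 hu
    calc (1 : ℝ) ≤ |(u j : ℝ)| := by exact_mod_cast Int.one_le_abs hj
      _ ≤ ‖ι ∘ u‖ := norm_le_pi_norm (ι ∘ u) j
  have hu₀ : ι ∘ u ≠ 0 := ne_zero_of_norm_ne_zero (by linarith)
  refine ⟨⌊‖ι ∘ u‖⌋₊, Nat.le_floor (by simpa using hu₁), fun j => Nat.le_floor ?_,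
    fun i => ?_⟩
  · rw [Nat.cast_natAbs, Int.cast_abs]
    exact norm_le_pi_norm (ι ∘ u) j
  · have key := hbound (ι ∘ c) (ι ∘ u) hu₀ i
    have hfloor : (⌊‖ι ∘ u‖⌋₊ : ℝ) ^ (i : ℕ) ≤ ‖ι ∘ u‖ ^ (i : ℕ) :=
      pow_le_pow_left₀ (Nat.cast_nonneg _) (Nat.floor_le (norm_nonneg _)) _
    have : ((c i).natAbs * ⌊‖ι ∘ u‖⌋₊ ^ (i : ℕ) : ℝ) ≤ ⌈γ⁻¹⌉₊ * H := by
      rw [Nat.cast_natAbs, Int.cast_abs]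
      calc |(c i : ℝ)| * ⌊‖ι ∘ u‖⌋₊ ^ (i : ℕ)
          ≤ |(c i : ℝ)| * ‖ι ∘ u‖ ^ (i : ℕ) := by gcongr
        _ ≤ γ⁻¹ * H := by rw [le_inv_mul_iff₀ hγ]; exact key.trans hnorm
        _ ≤ ⌈γ⁻¹⌉₊ * H := by gcongr; exact Nat.le_ceil _
    exact_mod_cast this

lemma exists_comp_eq_ofFn_comp_ofFn_mul_X {G K : ℤ[X]} {k M : ℕ} (hk : 0 < k) (hM : 0 < M)
    (hG : G.natDegree = k) (hK : K.natDegree = M) :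
    ∃ (c : Fin (k + 1) → ℤ) (u : Fin M → ℤ), c (Fin.last k) ≠ 0 ∧ u ≠ 0 ∧
      G.comp K = (ofFn (k + 1) c).comp (ofFn M u * X) := by
  set G' := G.comp (X + C (K.coeff 0))
  have hG' : G'.natDegree = k := by rw [natDegree_comp, natDegree_X_add_C, mul_one, hG]
  have hP : K.divX.natDegree < M := by rw [natDegree_divX_eq_natDegree_tsub_one, hK]; omega
  have hGc : ofFn (k + 1) (toFn (k + 1) G') = G' :=
    ofFn_comp_toFn_eq_id_of_natDegree_lt (by omega)
  have hPu : ofFn M (toFn M K.divX) = K.divX := ofFn_comp_toFn_eq_id_of_natDegree_lt hP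
  refine ⟨toFn (k + 1) G', toFn M K.divX, ?_, ?_, ?_⟩
  · have hG'0 : G' ≠ 0 := fun h => by simp [h] at hG'; omega
    simpa [toFn, ← hG'] using hG'0
  · intro hu
    rw [hu, map_zero, eq_comm, divX_eq_zero_iff] at hPu
    rw [hPu, natDegree_C] at hK
    omega
  · rw [hGc, hPu, comp_assoc, add_comp, X_comp, C_comp, divX_mul_X_add]

def compSet (k M H : ℕ) : Set ℤ[X] :=
  {f | HeightLe f H ∧ ∃ G K : ℤ[X], G.natDegree = k ∧ K.natDegree = M ∧ f = G.comp K}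

noncomputable def coeffBox (k M W B : ℕ) : Finset ((Fin (k + 1) → ℤ) × (Fin M → ℤ)) :=
  Fintype.piFinset (fun i : Fin (k + 1) =>
      Icc (-((W / B ^ (i : ℕ) : ℕ) : ℤ)) (W / B ^ (i : ℕ) : ℕ)) ×ˢ
    Fintype.piFinset fun _ : Fin M => Icc (-(B : ℤ)) B

/-- `B` plays the role of the height of the inner factor. -/
noncomputable def coeffRegion (k M W : ℕ) : Finset ((Fin (k + 1) → ℤ) × (Fin M → ℤ)) :=
  ((Icc 1 W).filter fun B => B ^ k ≤ W).biUnion (coeffBox k M W)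

lemma exists_compSet_subset_image_coeffRegion {k M : ℕ} (hk : 0 < k) (hM : 0 < M) :
    ∃ C : ℕ, ∀ H, compSet k M H ⊆ (fun p : (Fin (k + 1) → ℤ) × (Fin M → ℤ) =>
      (ofFn (k + 1) p.1).comp (ofFn M p.2 * X)) '' ↑(coeffRegion k M (C * H)) := by
  obtain ⟨C, hC⟩ := exists_natAbs_mul_pow_le k hM
  refine ⟨C, fun H f ⟨hH, G, K, hG, hK, hf⟩ => ?_⟩
  obtain ⟨c, u, hck, hu, hGK⟩ := exists_comp_eq_ofFn_comp_ofFn_mul_X hk hM hG hK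
  rw [hf, hGK] at hH
  obtain ⟨B, hB, hu, hc⟩ := hC c u H hu hH
  have hBk : B ^ k ≤ C * H :=
    (Nat.le_mul_of_pos_left _ (Int.natAbs_pos.2 hck)).trans (hc (Fin.last k))
  refine ⟨(c, u), ?_, by rw [hf, hGK]⟩
  simp only [coeffRegion, coeffBox, coe_biUnion, coe_filter, Set.mem_iUnion, mem_Icc, mem_coe,
    mem_product, Fintype.mem_piFinset]
  refine ⟨B, ⟨⟨hB, (Nat.le_self_pow hk.ne' B).trans hBk⟩, hBk⟩, fun i => ?_,
    fun j => ?_⟩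
  · have := (Nat.le_div_iff_mul_le (Nat.pow_pos hB)).2 (hc i)
    omega
  · have := hu j
    omega

lemma prod_two_mul_div_pow_add_one_mul_le {k B W : ℕ} (hB : 1 ≤ B) (hBk : B ^ k ≤ W) :
    (∏ i : Fin (k + 1), (2 * (W / B ^ (i : ℕ)) + 1)) * B ^ (k * (k + 1) / 2) ≤
      (3 * W) ^ (k + 1) := by
  have hpow : ∏ i : Fin (k + 1), B ^ (i : ℕ) = B ^ (k * (k + 1) / 2) := by
    rw [prod_pow_eq_pow_sum, Fin.sum_univ_eq_sum_range (fun i => i), sum_range_id,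
      Nat.add_sub_cancel, mul_comm]
  rw [← hpow, ← prod_mul_distrib, ← Fin.prod_const]
  refine prod_le_prod' fun i _ => ?_
  have hi : B ^ (i : ℕ) ≤ W := (Nat.pow_le_pow_right hB (Nat.lt_succ_iff.1 i.2)).trans hBk
  have := Nat.div_mul_le_self W (B ^ (i : ℕ))
  calc (2 * (W / B ^ (i : ℕ)) + 1) * B ^ (i : ℕ)
      = 2 * (W / B ^ (i : ℕ) * B ^ (i : ℕ)) + B ^ (i : ℕ) := by ring
    _ ≤ 3 * W := by omega

lemma sum_pow_le_pow_div_add_one {k W : ℕ} (hk : 0 < k) (E : ℕ) {F : Finset ℕ}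
    (hF : ∀ B ∈ F, 1 ≤ B ∧ B ^ k ≤ W) : ∑ B ∈ F, B ^ E ≤ W ^ (E / k + 1) := by
  rcases F.eq_empty_or_nonempty with rfl | hne
  · simp
  obtain ⟨N, hN, hmax⟩ := F.exists_max_image id hne
  have hcard : #F ≤ N := by
    simpa using card_le_card (fun B hB => mem_Icc.2 ⟨(hF B hB).1, hmax B hB⟩ : F ⊆ Icc 1 N)
  calc ∑ B ∈ F, B ^ E ≤ ∑ _B ∈ F, N ^ E :=
        sum_le_sum fun B hB => Nat.pow_le_pow_left (hmax B hB) E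
    _ = #F * N ^ E := by rw [sum_const, smul_eq_mul]
    _ ≤ N ^ (E + 1) := by rw [pow_succ']; gcongr
    _ ≤ N ^ (k * (E / k + 1)) := Nat.pow_le_pow_right (hF N hN).1 (Nat.lt_mul_div_succ E hk)
    _ = (N ^ k) ^ (E / k + 1) := pow_mul _ _ _
    _ ≤ W ^ (E / k + 1) := Nat.pow_le_pow_left (hF N hN).2 _

lemma card_coeffBox_le {k M W B : ℕ} (hB : 1 ≤ B) (hBk : B ^ k ≤ W) :
    #(coeffBox k M W B) ≤ 3 ^ (k + 1 + M) * W ^ (k + 1) * B ^ (M - k * (k + 1) / 2) := by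
  have hcard (n : ℕ) : #(Icc (-(n : ℤ)) n) = 2 * n + 1 := by
    rw [Int.card_Icc]; omega
  rw [coeffBox, card_product, Fintype.card_piFinset, Fintype.card_piFinset]
  simp only [hcard, prod_const, card_univ, Fintype.card_fin]
  set P := ∏ i : Fin (k + 1), (2 * (W / B ^ (i : ℕ)) + 1)
  set S := k * (k + 1) / 2
  have hP : P * B ^ S ≤ (3 * W) ^ (k + 1) := prod_two_mul_div_pow_add_one_mul_le hB hBk
  have hB3 : (2 * B + 1) ^ M ≤ 3 ^ M * (B ^ (M - S) * B ^ S) :=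
    calc (2 * B + 1) ^ M ≤ (3 * B) ^ M := Nat.pow_le_pow_left (by omega) M
      _ = 3 ^ M * B ^ M := mul_pow _ _ _
      _ ≤ 3 ^ M * (B ^ (M - S) * B ^ S) := by rw [← pow_add]; gcongr; omega
  calc P * (2 * B + 1) ^ M ≤ P * (3 ^ M * (B ^ (M - S) * B ^ S)) := Nat.mul_le_mul_left _ hB3
    _ = 3 ^ M * B ^ (M - S) * (P * B ^ S) := by ring
    _ ≤ 3 ^ M * B ^ (M - S) * (3 * W) ^ (k + 1) := Nat.mul_le_mul_left _ hP
    _ = 3 ^ (k + 1 + M) * W ^ (k + 1) * B ^ (M - S) := by ring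

/-- Summing the box sizes `W ^ (k + 1) * B ^ (M - k (k + 1) / 2)` over `B ≤ W ^ (1 / k)`. -/
def compExponent (k M : ℕ) : ℕ := k + 2 + (M - k * (k + 1) / 2) / k

lemma card_coeffRegion_le {k : ℕ} (hk : 0 < k) (M W : ℕ) :
    #(coeffRegion k M W) ≤ 3 ^ (k + 1 + M) * W ^ compExponent k M := by
  set F := (Icc 1 W).filter fun B => B ^ k ≤ W
  set E := M - k * (k + 1) / 2
  have hF : ∀ B ∈ F, 1 ≤ B ∧ B ^ k ≤ W := fun B hB => by
    simp only [F, mem_filter, mem_Icc] at hB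
    exact ⟨hB.1.1, hB.2⟩
  calc #(coeffRegion k M W) ≤ ∑ B ∈ F, 3 ^ (k + 1 + M) * W ^ (k + 1) * B ^ E :=
        card_biUnion_le.trans (sum_le_sum fun B hB => card_coeffBox_le (hF B hB).1 (hF B hB).2)
    _ = 3 ^ (k + 1 + M) * W ^ (k + 1) * ∑ B ∈ F, B ^ E := (mul_sum _ _ _).symm
    _ ≤ 3 ^ (k + 1 + M) * W ^ (k + 1) * W ^ (E / k + 1) := by
        gcongr; exact sum_pow_le_pow_div_add_one hk E hF
    _ = 3 ^ (k + 1 + M) * W ^ (k + 2 + E / k) := by ring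

lemma exists_ncard_compSet_le {k M : ℕ} (hk : 0 < k) (hM : 0 < M) :
    ∃ C : ℕ, ∀ H, (compSet k M H).ncard ≤ C * H ^ compExponent k M := by
  obtain ⟨C, hC⟩ := exists_compSet_subset_image_coeffRegion hk hM
  refine ⟨3 ^ (k + 1 + M) * C ^ compExponent k M, fun H => ?_⟩
  set R := coeffRegion k M (C * H)
  calc (compSet k M H).ncard ≤ (R : Set ((Fin (k + 1) → ℤ) × (Fin M → ℤ))).ncard :=
        (Set.ncard_le_ncard (hC H) (R.finite_toSet.image _)).trans
          (Set.ncard_image_le R.finite_toSet)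
    _ = #R := Set.ncard_coe_finset R
    _ ≤ 3 ^ (k + 1 + M) * (C * H) ^ compExponent k M := card_coeffRegion_le hk M _
    _ = 3 ^ (k + 1 + M) * C ^ compExponent k M * H ^ compExponent k M := by ring

lemma two_mul_minFac_le_div_of_minFac_add_one_dvd {d : ℕ} (hd : 0 < d) (hd6 : d ≠ 6)
    (h : d.minFac + 1 ∣ d) : 2 * d.minFac ≤ d / (d.minFac + 1) := by
  have h2 : 2 ∣ d := by
    rcases Nat.even_or_odd d.minFac with ⟨t, ht⟩ | ⟨t, ht⟩
    · exact (Dvd.intro t (by omega)).trans (Nat.minFac_dvd d)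
    · exact (Dvd.intro (t + 1) (by omega)).trans h
  rw [(Nat.minFac_eq_two_iff d).2 h2] at h ⊢
  omega

lemma compExponent_le_div_minFac {d M : ℕ} (hd6 : d ≠ 6) (hMd : M ∣ d) (hℓM : d.minFac < M)
    (hM : M < d) : compExponent (d / M) M ≤ d / d.minFac := by
  obtain ⟨k, rfl⟩ := hMd
  have hM0 : 0 < M := by omega
  have hk2 : 2 ≤ k := by
    by_contra! hk
    interval_cases k <;> omega
  set ℓ := (M * k).minFac
  have hℓk : ℓ ≤ k := Nat.minFac_le_of_dvd hk2 (Dvd.intro_left M rfl)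
  rw [Nat.le_div_iff_mul_le (Nat.minFac_pos _), compExponent, Nat.mul_div_cancel_left k hM0]
  set S := k * (k + 1) / 2
  have hS : 2 * S = k * (k + 1) := Nat.two_mul_div_two_of_even (Nat.even_mul_succ_self k)
  rcases Nat.eq_zero_or_pos ((M - S) / k) with hq | hq
  · rw [hq]
    rcases (show ℓ + 2 ≤ M ∨ M = ℓ + 1 by omega) with hM2 | hM1
    · nlinarith
    · have hdvd : ℓ + 1 ∣ M * k := by rw [← hM1]; exact dvd_mul_right M k
      have := two_mul_minFac_le_div_of_minFac_add_one_dvd (by omega) hd6 hdvd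
      rw [← hM1, Nat.mul_div_cancel_left k hM0] at this
      nlinarith
  · set q := (M - S) / k
    have hkq : k * q ≤ M - S := Nat.mul_div_le (M - S) k
    have hMS : S + k ≤ M := by
      have := (Nat.le_div_iff_mul_le (by omega)).1 hq
      omega
    have hE : M - S + S = M := by omega
    nlinarith

lemma not_decomposable_of_prime_natDegree {h : ℤ[X]} (hp : h.natDegree.Prime) :
    ¬ Decomposable h := by
  rintro ⟨a, b, ha, hb, rfl⟩
  rw [natDegree_comp] at hp
  exact Nat.not_prime_mul (by omega) (by omega) hp

lemma Decomposable.exists_comp_minFac_lt {f : ℤ[X]} (hf : Decomposable f)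
    (hI : ¬ ∃ g h : ℤ[X], ¬ Decomposable g ∧ ¬ Decomposable h ∧
      g.natDegree = f.natDegree / f.natDegree.minFac ∧ h.natDegree = f.natDegree.minFac ∧
        f = g.comp h) :
    ∃ G K : ℤ[X], 2 ≤ G.natDegree ∧ f.natDegree.minFac < K.natDegree ∧ f = G.comp K := by
  obtain ⟨g, h, hg, hh, rfl⟩ := hf
  have hdeg : (g.comp h).natDegree = g.natDegree * h.natDegree := natDegree_comp
  have hℓh : (g.comp h).natDegree.minFac ≤ h.natDegree :=
    Nat.minFac_le_of_dvd hh (hdeg ▸ Dvd.intro_left _ rfl)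
  rcases hℓh.lt_or_eq with hlt | heq
  · exact ⟨g, h, hg, hlt, rfl⟩
  by_cases hgd : Decomposable g
  · obtain ⟨u, v, hu, hv, rfl⟩ := hgd
    refine ⟨u, v.comp h, hu, ?_, comp_assoc _ _ _⟩
    rw [heq, natDegree_comp]
    nlinarith
  · refine absurd ⟨g, h, hgd, not_decomposable_of_prime_natDegree ?_, ?_, heq.symm, rfl⟩ hI
    · exact heq ▸ Nat.minFac_prime (by nlinarith)
    · rw [heq, hdeg, Nat.mul_div_cancel _ (by omega)]

lemma finite_setOf_natDegree_le_heightLe (D H : ℕ) :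
    {f : ℤ[X] | f.natDegree ≤ D ∧ HeightLe f H}.Finite := by
  refine ((Fintype.piFinset fun _ : Fin (D + 1) => Icc (-(H : ℤ)) H).finite_toSet.image
    (ofFn (D + 1))).subset ?_
  rintro f ⟨hf, hH⟩
  exact ⟨toFn (D + 1) f, Fintype.mem_piFinset.2 fun i => mem_Icc.2 (abs_le.1 (hH i)),
    ofFn_comp_toFn_eq_id_of_natDegree_lt (Nat.lt_succ_of_le hf)⟩

lemma IdStar_le_DdStar {d e : ℕ} (he : 2 ≤ e) (hde : 2 ≤ d / e) (H : ℕ) :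
    IdStar d e H ≤ DdStar d H := by
  refine Set.ncard_le_ncard ?_
    ((finite_setOf_natDegree_le_heightLe d H).subset fun f hf => ⟨hf.1.le, hf.2.2.1⟩)
  rintro f ⟨hdeg, hf0, hH, g, h, -, -, hg, hh, hf⟩
  exact ⟨hdeg, hf0, hH, g, h, hg ▸ hde, hh ▸ he, hf⟩

lemma DdStar_le_IdStar_add_sum (d H : ℕ) :
    DdStar d H ≤ IdStar d d.minFac H +
      ∑ M ∈ d.divisors with d.minFac < M ∧ M < d, (compSet (d / M) M H).ncard := by
  set I := {f : ℤ[X] | f.natDegree = d ∧ f ≠ 0 ∧ HeightLe f H ∧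
    ∃ g h : ℤ[X], ¬ Decomposable g ∧ ¬ Decomposable h ∧
      g.natDegree = d / d.minFac ∧ h.natDegree = d.minFac ∧ f = g.comp h}
  set U := ⋃ M ∈ d.divisors.filter fun M => d.minFac < M ∧ M < d, compSet (d / M) M H
  have hcover : {f : ℤ[X] | f.natDegree = d ∧ f ≠ 0 ∧ HeightLe f H ∧ Decomposable f} ⊆
      I ∪ U := by
    rintro f ⟨hdeg, hf0, hH, hdec⟩
    by_cases hI : f ∈ I
    · exact Or.inl hI
    subst hdeg
    obtain ⟨G, K, hG, hK, rfl⟩ := hdec.exists_comp_minFac_lt fun h => hI ⟨rfl, hf0, hH, h⟩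
    have hdeg : (G.comp K).natDegree = G.natDegree * K.natDegree := natDegree_comp
    refine Or.inr (Set.mem_biUnion (x := K.natDegree) ?_ ⟨hH, G, K, ?_, rfl, rfl⟩)
    · simp only [coe_filter, Nat.mem_divisors, Set.mem_ofPred_eq]
      exact ⟨⟨hdeg ▸ Dvd.intro_left _ rfl, by nlinarith⟩, hK, by nlinarith⟩
    · rw [hdeg, Nat.mul_div_cancel _ (by omega)]
  have hfin : (I ∪ U).Finite := by
    refine (finite_setOf_natDegree_le_heightLe d H).subset ?_
    rintro f (⟨hdeg, -, hH, -⟩ | hf)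
    · exact ⟨hdeg.le, hH⟩
    · obtain ⟨M, -, hH, G, K, hG, hK, rfl⟩ := Set.mem_iUnion₂.1 hf
      exact ⟨by rw [natDegree_comp, hG, hK]; exact Nat.div_mul_le_self d M, hH⟩
  calc DdStar d H ≤ (I ∪ U).ncard := Set.ncard_le_ncard hcover hfin
    _ ≤ I.ncard + U.ncard := Set.ncard_union_le _ _
    _ ≤ _ := Nat.add_le_add_left (set_ncard_biUnion_le _ _) _

theorem stmt_13 (d : ℕ) (hd : 4 ≤ d) (hcomp : ¬ Nat.Prime d) (hne : d ≠ 6) :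
    ∃ c : ℝ, 0 < c ∧ ∀ H : ℕ, 2 ≤ H →
      |(DdStar d H : ℝ) - (IdStar d d.minFac H : ℝ)| ≤ c * (H : ℝ) ^ (d / d.minFac) := by
  set ℓ := d.minFac
  have hℓ : 2 ≤ ℓ := (Nat.minFac_prime (by omega)).two_le
  have hdℓ : 2 ≤ d / ℓ := by
    rw [Nat.le_div_iff_mul_le (by omega)]
    nlinarith [Nat.minFac_sq_le_self (by omega) hcomp]
  set DS := d.divisors.filter fun M => ℓ < M ∧ M < d
  have hbound : ∀ M ∈ DS, ∃ C : ℕ, ∀ H, 1 ≤ H →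
      (compSet (d / M) M H).ncard ≤ C * H ^ (d / ℓ) := by
    intro M hM
    simp only [DS, mem_filter, Nat.mem_divisors] at hM
    obtain ⟨C, hC⟩ :=
      exists_ncard_compSet_le (M := M) (Nat.div_pos hM.2.2.le (by omega)) (by omega)
    exact ⟨C, fun H hH => (hC H).trans (Nat.mul_le_mul_left _
      (Nat.pow_le_pow_right hH (compExponent_le_div_minFac hne hM.1.1 hM.2.1 hM.2.2)))⟩
  choose! C hC using hbound
  refine ⟨∑ M ∈ DS, (C M : ℝ) + 1, by positivity, fun H hH => ?_⟩
  have hID : (IdStar d ℓ H : ℝ) ≤ DdStar d H := mod_cast IdStar_le_DdStar hℓ hdℓ H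
  have hDI : DdStar d H ≤ IdStar d ℓ H + (∑ M ∈ DS, C M) * H ^ (d / ℓ) := by
    rw [sum_mul]
    exact (DdStar_le_IdStar_add_sum d H).trans
      (Nat.add_le_add_left (sum_le_sum fun M hM => hC M hM H (by omega)) _)
  have hDI' : (DdStar d H : ℝ) ≤
      IdStar d ℓ H + (∑ M ∈ DS, (C M : ℝ)) * (H : ℝ) ^ (d / ℓ) := mod_cast hDI
  rw [abs_of_nonneg (sub_nonneg.2 hID)]
  nlinarith [pow_nonneg (Nat.cast_nonneg H : (0 : ℝ) ≤ H) (d / ℓ)]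
end

section
/- Let d ≥ 2 be an integer. There exists a constant c > 0 (depending only on d) such that for all polynomials f, g, h ∈ ℂ[x] with f = g∘h, deg f = d, deg g = m, h(0) = 0, and a the leading coefficient of g, one has |a|·H(h)^m ≤ c·H(f). -/
/-!
Choose `z₀` on the unit circle with `‖h z₀‖ ≥ H(h)` (Cauchy's estimate) and put `ρ = ‖h z₀‖`.
The `m` roots of `g` cannot meet all `m + 1` disjoint annuli `ρ / (2 · 4^j) < ‖w‖ < 2ρ / 4^j`,
`j ≤ m`; for a missed one, with `r = ρ / 4^j`, the intermediate value theorem on the segment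
`[0, z₀]` gives `‖z‖ ≤ 1` with `‖h z‖ = r`, so every factor of `g (h z) = a ∏ (h z - β)` has norm
at least `r / 2`. Hence `‖a‖ (H(h) / (2 · 4^m))^m ≤ ‖f z‖ ≤ (d + 1) H(f)`.
-/

open Polynomial

/-- The height of a complex polynomial: the maximum of the absolute values of its
coefficients. -/
noncomputable def cheight (f : ℂ[X]) : ℝ :=
  (Finset.range (f.natDegree + 1)).sup' (by simp) fun i => ‖f.coeff i‖

open Metric Set

lemma norm_coeff_le_cheight (p : ℂ[X]) (i : ℕ) : ‖p.coeff i‖ ≤ cheight p := by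
  rcases le_or_gt i p.natDegree with hi | hi
  · exact Finset.le_sup' (fun i => ‖p.coeff i‖) (Finset.mem_range_succ_iff.mpr hi)
  · rw [coeff_eq_zero_of_natDegree_lt hi, norm_zero]
    exact (norm_nonneg _).trans (norm_coeff_le_cheight p 0)

lemma cheight_nonneg (p : ℂ[X]) : 0 ≤ cheight p :=
  (norm_nonneg _).trans (norm_coeff_le_cheight p 0)

lemma cheight_le_of_forall_norm_coeff_le (p : ℂ[X]) {C : ℝ} (hC : ∀ i, ‖p.coeff i‖ ≤ C) :
    cheight p ≤ C :=
  Finset.sup'_le _ _ fun i _ => hC i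

lemma norm_eval_le_of_norm_le_one (p : ℂ[X]) {z : ℂ} (hz : ‖z‖ ≤ 1) :
    ‖p.eval z‖ ≤ (p.natDegree + 1) * cheight p := by
  rw [eval_eq_sum_range]
  calc ‖∑ i ∈ Finset.range (p.natDegree + 1), p.coeff i * z ^ i‖
      ≤ ∑ i ∈ Finset.range (p.natDegree + 1), cheight p := by
        refine (norm_sum_le _ _).trans (Finset.sum_le_sum fun i _ => ?_)
        rw [norm_mul, norm_pow]
        exact (mul_le_of_le_one_right (norm_nonneg _) (pow_le_one₀ (norm_nonneg z) hz)).trans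
          (norm_coeff_le_cheight p i)
    _ = (p.natDegree + 1) * cheight p := by simp

lemma iteratedDeriv_eval_zero {𝕜 : Type*} [NontriviallyNormedField 𝕜] (p : 𝕜[X]) (n : ℕ) :
    iteratedDeriv n (fun x => p.eval x) 0 = n.factorial * p.coeff n := by
  have h : ∀ q : 𝕜[X], iteratedDeriv n (fun x => q.eval x) =
      fun x => (derivative^[n] q).eval x := by
    induction n with
    | zero => simp
    | succ n ih =>
      intro q
      rw [iteratedDeriv_succ', funext fun x => q.deriv (x := x), ih, Function.iterate_succ_apply]
  simp only [h]
  rw [← coeff_zero_eq_eval_zero, coeff_iterate_derivative, zero_add,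
    Nat.descFactorial_self, nsmul_eq_mul]

lemma norm_coeff_le_of_forall_mem_sphere (p : ℂ[X]) {C : ℝ}
    (hC : ∀ z ∈ sphere (0 : ℂ) 1, ‖p.eval z‖ ≤ C) (n : ℕ) : ‖p.coeff n‖ ≤ C := by
  have := Complex.norm_iteratedDeriv_le_of_forall_mem_sphere_norm_le n one_pos
    (p.differentiable (𝕜 := ℂ)).diffContOnCl hC
  rw [iteratedDeriv_eval_zero, norm_mul, one_pow, div_one, Complex.norm_natCast] at this
  exact le_of_mul_le_mul_left this (by positivity)

lemma exists_norm_eq_one_cheight_le_norm_eval (p : ℂ[X]) :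
    ∃ z : ℂ, ‖z‖ = 1 ∧ cheight p ≤ ‖p.eval z‖ := by
  obtain ⟨z, hz, hmax⟩ := (isCompact_sphere (0 : ℂ) 1).exists_isMaxOn
    (NormedSpace.sphere_nonempty.mpr zero_le_one) (p.continuous.norm.continuousOn)
  refine ⟨z, mem_sphere_zero_iff_norm.mp hz, cheight_le_of_forall_norm_coeff_le p ?_⟩
  exact norm_coeff_le_of_forall_mem_sphere p hmax

lemma exists_norm_le_norm_apply_eq {E F : Type*} [NormedAddCommGroup E] [NormedSpace ℝ E]
    [NormedAddCommGroup F] {f : E → F} (hf : Continuous f) (hf0 : f 0 = 0) (z₀ : E) {r : ℝ}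
    (hr : r ∈ Icc 0 ‖f z₀‖) : ∃ z, ‖z‖ ≤ ‖z₀‖ ∧ ‖f z‖ = r := by
  have hseg : segment ℝ 0 z₀ ⊆ closedBall 0 ‖z₀‖ :=
    (convex_closedBall 0 _).segment_subset (mem_closedBall_self (norm_nonneg _))
      (mem_closedBall_zero_iff.mpr le_rfl)
  have hIcc : Icc ‖f 0‖ ‖f z₀‖ ⊆ (fun z => ‖f z‖) '' segment ℝ 0 z₀ :=
    (convex_segment 0 z₀).isPreconnected.intermediate_value (left_mem_segment ℝ 0 z₀)
      (right_mem_segment ℝ 0 z₀) hf.norm.continuousOn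
  rw [hf0, norm_zero] at hIcc
  obtain ⟨z, hz, hzr⟩ := hIcc hr
  exact ⟨z, mem_closedBall_zero_iff.mp (hseg hz), hzr⟩

lemma notMem_Ioo_div_four_pow_of_lt {ρ x : ℝ} (hρ : 0 ≤ ρ) {i j : ℕ} (hij : i < j)
    (hi : x ∈ Ioo (ρ / 4 ^ i / 2) (2 * (ρ / 4 ^ i))) :
    x ∉ Ioo (ρ / 4 ^ j / 2) (2 * (ρ / 4 ^ j)) := by
  have h4 : (4 : ℝ) ^ (i + 1) ≤ 4 ^ j := pow_le_pow_right₀ (by norm_num) hij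
  have : 2 * (ρ / 4 ^ j) ≤ ρ / 4 ^ i / 2 := by
    calc 2 * (ρ / 4 ^ j) ≤ 2 * (ρ / 4 ^ (i + 1)) := by gcongr
      _ = ρ / 4 ^ i / 2 := by rw [pow_succ]; ring
  exact fun hj => hi.1.not_gt (hj.2.trans_le this)

lemma exists_forall_notMem_Ioo_div_four_pow (s : Finset ℝ) {m : ℕ} (hs : s.card ≤ m) {ρ : ℝ}
    (hρ : 0 ≤ ρ) : ∃ j ≤ m, ∀ x ∈ s, x ∉ Ioo (ρ / 4 ^ j / 2) (2 * (ρ / 4 ^ j)) := by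
  by_contra! hall
  have : ∀ j : Fin (m + 1), ∃ x ∈ s, x ∈ Ioo (ρ / 4 ^ (j : ℕ) / 2) (2 * (ρ / 4 ^ (j : ℕ))) :=
    fun j => hall j (Nat.lt_succ_iff.mp j.isLt)
  choose F hFs hF using this
  obtain ⟨i, -, j, -, hij, hFij⟩ := Finset.exists_ne_map_eq_of_card_lt_of_maps_to
    (s := Finset.univ) (t := s) (f := F) (by simpa using Nat.lt_succ_of_le hs)
    (fun j _ => hFs j)
  rcases lt_or_gt_of_ne (Fin.val_ne_of_ne hij) with hlt | hlt
  · exact notMem_Ioo_div_four_pow_of_lt hρ hlt (hF i) (hFij ▸ hF j)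
  · exact notMem_Ioo_div_four_pow_of_lt hρ hlt (hF j) (hFij ▸ hF i)

lemma half_norm_le_norm_sub {E : Type*} [SeminormedAddCommGroup E] {w β : E}
    (hβ : ‖β‖ ∉ Ioo (‖w‖ / 2) (2 * ‖w‖)) : ‖w‖ / 2 ≤ ‖w - β‖ := by
  rw [mem_Ioo, not_and_or, not_lt, not_lt] at hβ
  rcases hβ with hβ | hβ
  · linarith [norm_sub_norm_le w β]
  · linarith [norm_sub_norm_le β w, norm_sub_rev w β, norm_nonneg w]

lemma leadingCoeff_mul_pow_le_norm_eval {K : Type*} [NormedField K] {g : K[X]} (hg : Splits g)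
    {w : K} {δ : ℝ} (hδ : 0 ≤ δ) (hroots : ∀ β ∈ g.roots, δ ≤ ‖w - β‖) :
    ‖g.leadingCoeff‖ * δ ^ g.natDegree ≤ ‖g.eval w‖ := by
  rw [hg.natDegree_eq_card_roots]
  calc ‖g.leadingCoeff‖ * δ ^ g.roots.card
      = ‖g.leadingCoeff‖ * (g.roots.map fun _ => δ).prod := by simp
    _ ≤ ‖g.leadingCoeff‖ * (g.roots.map fun β => ‖w - β‖).prod := by
        gcongr
        exact Multiset.prod_map_le_prod_map₀ _ _ (fun _ _ => hδ) hroots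
    _ = ‖g.eval w‖ := by
        rw [hg.eval_eq_prod_roots, norm_mul, ← normHom_apply (g.roots.map _).prod,
          map_multiset_prod, Multiset.map_map]
        rfl

lemma exists_norm_le_one_leadingCoeff_mul_le_norm_eval_comp (g h : ℂ[X]) (hh0 : h.eval 0 = 0) :
    ∃ z : ℂ, ‖z‖ ≤ 1 ∧ ‖g.leadingCoeff‖ * (cheight h / (2 * 4 ^ g.natDegree)) ^ g.natDegree ≤
      ‖(g.comp h).eval z‖ := by
  obtain ⟨z₀, hz₀, hhz₀⟩ := exists_norm_eq_one_cheight_le_norm_eval h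
  have hcard : ((g.roots.map (‖·‖)).toFinset).card ≤ g.natDegree :=
    (Multiset.toFinset_card_le _).trans ((Multiset.card_map _ _).le.trans (card_roots' g))
  obtain ⟨j, hj, hgap⟩ :=
    exists_forall_notMem_Ioo_div_four_pow _ hcard (norm_nonneg (h.eval z₀))
  set r := ‖h.eval z₀‖ / 4 ^ j
  obtain ⟨z, hz, hzr⟩ := exists_norm_le_norm_apply_eq h.continuous hh0 z₀ (r := r)
    ⟨by positivity, div_le_self (norm_nonneg _) (one_le_pow₀ (by norm_num))⟩
  refine ⟨z, hz.trans hz₀.le, ?_⟩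
  have hδ : cheight h / (2 * 4 ^ g.natDegree) ≤ r / 2 := by
    rw [div_div, mul_comm]
    gcongr
    norm_num
  rw [eval_comp]
  refine leadingCoeff_mul_pow_le_norm_eval (IsAlgClosed.splits g)
    (div_nonneg (cheight_nonneg h) (by positivity)) fun β hβ => hδ.trans ?_
  have hβ' := hgap _ (Multiset.mem_toFinset.mpr (Multiset.mem_map_of_mem _ hβ))
  rw [← hzr] at hβ' ⊢
  exact half_norm_le_norm_sub hβ'

theorem stmt_14 (d : ℕ) (hd : 2 ≤ d) :
    ∃ c : ℝ, 0 < c ∧ ∀ (m : ℕ) (f g h : ℂ[X]), f = g.comp h → f.natDegree = d →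
      g.natDegree = m → h.eval 0 = 0 →
      ‖g.leadingCoeff‖ * cheight h ^ m ≤ c * cheight f := by
  refine ⟨(2 * 4 ^ d) ^ d * (d + 1), by positivity, ?_⟩
  rintro m f g h rfl hf rfl hh0
  have hgd : g.natDegree ≤ d := by
    rw [← hf, natDegree_comp]
    refine Nat.le_mul_of_pos_right _ (Nat.pos_of_ne_zero fun h0 => ?_)
    rw [natDegree_comp, h0, mul_zero] at hf
    omega
  obtain ⟨z, hz, hlow⟩ := exists_norm_le_one_leadingCoeff_mul_le_norm_eval_comp g h hh0
  have hup := norm_eval_le_of_norm_le_one (g.comp h) hz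
  rw [hf] at hup
  have hC : ((2 : ℝ) * 4 ^ g.natDegree) ^ g.natDegree ≤ (2 * 4 ^ d) ^ d :=
    (pow_le_pow_left₀ (by positivity) (by gcongr; norm_num) _).trans
      (pow_le_pow_right₀ (one_le_mul_of_one_le_of_one_le one_le_two (one_le_pow₀ (by norm_num)))
        hgd)
  calc ‖g.leadingCoeff‖ * cheight h ^ g.natDegree
      = (2 * 4 ^ g.natDegree) ^ g.natDegree *
          (‖g.leadingCoeff‖ * (cheight h / (2 * 4 ^ g.natDegree)) ^ g.natDegree) := by
        rw [div_pow]
        field_simp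
    _ ≤ (2 * 4 ^ d) ^ d * ((d + 1) * cheight (g.comp h)) :=
        mul_le_mul hC (hlow.trans hup) (by have := cheight_nonneg h; positivity) (by positivity)
    _ = (2 * 4 ^ d) ^ d * (d + 1) * cheight (g.comp h) := by ring
end
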